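/- arXiv:1108.5747 — 9 statements merged into one kernel-verified Lean document; each statement's English description precedes it below -/
import Mathlib

section
/- Let X be a filter space with accumulation point a, and let Y be a subspace of X (with the subspace topology) containing the point a. Then the map f : X → Y defined by f(x) = x for x ∈ Y and f(x) = a for x ∈ X \ Y is a quotient map. -/
universe u

/-- A filter space: a topological space with precisely one accumulation (non-isolated) point,
namely `a`. -/
def IsFilterSpace (X : Type u) [TopologicalSpace X] (a : X) : Prop :=
  ¬ IsOpen ({a} : Set X) ∧ ∀ x : X, x ≠ a → IsOpen ({x} : Set X)

/-- In a filter space with accumulation point `a`, any set avoiding `a` is open. -/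
lemma isOpen_of_not_mem {X : Type u} [TopologicalSpace X] {a : X} (hX : IsFilterSpace X a)
    {S : Set X} (hS : a ∉ S) : IsOpen S := by
  have h : S = ⋃ x ∈ S, {x} := by simp
  rw [h]
  exact isOpen_biUnion fun x hx => hX.2 x (fun h => hS (h ▸ hx))

open scoped Classical in
/-- If `X` is a filter space with accumulation point `a` and `Y` is a subspace of `X`
containing `a`, then the map `f : X → Y` defined by `f x = x` for `x ∈ Y` and `f x = a`
otherwise is a quotient map. -/
theorem stmt0 (X : Type u) [TopologicalSpace X] (a : X) (hX : IsFilterSpace X a)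
    (Y : Set X) (ha : a ∈ Y) :
    Topology.IsQuotientMap (fun x : X => if h : x ∈ Y then (⟨x, h⟩ : Y) else ⟨a, ha⟩) := by
  set f : X → Y := fun x : X => if h : x ∈ Y then (⟨x, h⟩ : Y) else ⟨a, ha⟩ with hf
  have hcont : Continuous f := by
    constructor
    intro U hU
    obtain ⟨V, hV, rfl⟩ := isOpen_induced_iff.mp hU
    by_cases haV : a ∈ V
    · have heq : f ⁻¹' (Subtype.val ⁻¹' V) = V ∪ Yᶜ := by
        ext x
        by_cases hx : x ∈ Y <;> simp [hf, hx, haV]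
      rw [heq]
      exact hV.union (isOpen_of_not_mem hX (by simp [ha]))
    · apply isOpen_of_not_mem hX
      simp [hf, ha, haV]
  exact Topology.IsQuotientMap.of_inverse continuous_subtype_val hcont
    (fun y => by simp [hf, y.2])
end

section
/- Let f : X → Y be a quotient map between topological spaces, let A ⊆ Y, and suppose f is one-to-one outside A, i.e., the restriction of f to f⁻¹(Y \ A) is injective. Then the restriction of f to f⁻¹(A), viewed as a map f⁻¹(A) → A between the corresponding subspaces, is a quotient map. -/
universe u

open Set Topology

theorem Set.InjOn.preimage_image_diff {X Y : Type*} {f : X → Y} {s : Set Y}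
    (hinj : InjOn f (f ⁻¹' sᶜ)) (U : Set X) : f ⁻¹' (f '' U \ s) = U \ f ⁻¹' s := by
  ext x
  constructor
  · rintro ⟨⟨u, hu, hux⟩, hxs⟩
    have hus : u ∈ f ⁻¹' sᶜ := by simpa [mem_preimage, hux] using hxs
    exact ⟨hinj hus hxs hux ▸ hu, hxs⟩
  · rintro ⟨hxU, hxs⟩
    exact ⟨mem_image_of_mem f hxU, hxs⟩

/- An open set `W` of `s` whose preimage is cut out by an open `U ⊆ X` is cut out by
`W ∪ (f '' U \ s)`, whose preimage is exactly `U` because `f` is injective off `f ⁻¹' s`. -/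
theorem Topology.IsCoinducing.restrictPreimage_of_injOn_compl {X Y : Type*}
    [TopologicalSpace X] [TopologicalSpace Y] {f : X → Y} (hf : IsCoinducing f) {s : Set Y}
    (hinj : InjOn f (f ⁻¹' sᶜ)) : IsCoinducing (s.restrictPreimage f) := by
  refine .of_isOpen_preimage_iff_isOpen fun W ↦ ⟨fun hW ↦ ?_, fun hW ↦ ?_⟩
  · obtain ⟨U, hU, hUW⟩ := isOpen_induced_iff.1 hW
    have hUs : U ∩ f ⁻¹' s = f ⁻¹' (Subtype.val '' W) := by
      rw [← image_val_preimage_restrictPreimage, ← hUW, Subtype.image_preimage_coe, inter_comm]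
    have hV : f ⁻¹' (Subtype.val '' W ∪ (f '' U \ s)) = U := by
      rw [preimage_union, ← hUs, hinj.preimage_image_diff, inter_union_sdiff]
    refine isOpen_induced_iff.2 ⟨_, hf.isOpen_preimage.1 (hV ▸ hU), ?_⟩
    ext
    simp
  · exact hf.continuous.restrictPreimage.isOpen_preimage W hW

theorem Topology.IsQuotientMap.restrictPreimage_of_injOn_compl {X Y : Type*}
    [TopologicalSpace X] [TopologicalSpace Y] {f : X → Y} (hf : IsQuotientMap f) {s : Set Y}
    (hinj : InjOn f (f ⁻¹' sᶜ)) : IsQuotientMap (s.restrictPreimage f) :=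
  (isQuotientMap_iff _).2
    ⟨hf.isCoinducing.restrictPreimage_of_injOn_compl hinj, hf.surjective.restrictPreimage _⟩

/-- If `f : X → Y` is a quotient map, `A ⊆ Y`, and `f` is one-to-one outside `A`
(i.e. injective on `f ⁻¹' (Y \ A) = f ⁻¹' Aᶜ`), then the restriction of `f` to `f ⁻¹' A`,
viewed as a map `f ⁻¹' A → A` between subspaces, is a quotient map. -/
theorem stmt1 (X Y : Type u) [TopologicalSpace X] [TopologicalSpace Y]
    (f : X → Y) (hf : Topology.IsQuotientMap f) (A : Set Y)
    (hinj : Set.InjOn f (f ⁻¹' Aᶜ)) :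
    Topology.IsQuotientMap (fun x : (f ⁻¹' A : Set X) => (⟨f x.1, x.2⟩ : A)) :=
  hf.restrictPreimage_of_injOn_compl hinj
end

section
/- Let A be a filter space with accumulation point a. A topological space X belongs to CH({A}) if and only if for every subset M ⊆ X the closure of M equals M̃, the transfinite A-closure of M. -/
universe u v

/-- A class of topological spaces (in universe `u`): a predicate on spaces. -/
abbrev TopClass : Type (u + 1) := (X : Type u) → TopologicalSpace X → Prop

/-- A class of topological spaces is coreflective if it is closed under the formation of
topological sums and quotient spaces. -/
def IsCoreflective (C : TopClass.{u}) : Prop :=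
  (∀ (ι : Type u) (X : ι → Type u) (t : (i : ι) → TopologicalSpace (X i)),
      (∀ i, C (X i) (t i)) → C ((i : ι) × X i) (@instTopologicalSpaceSigma ι X t)) ∧
  (∀ (X Y : Type u) (tX : TopologicalSpace X) (tY : TopologicalSpace Y) (f : X → Y),
      @Topology.IsQuotientMap X Y tX tY f → C X tX → C Y tY)

/-- The coreflective hull of a class of spaces: the smallest coreflective class containing it. -/
def CH (A : TopClass.{u}) : TopClass.{u} :=
  fun X tX => ∀ C : TopClass.{u}, IsCoreflective C → (∀ Y tY, A Y tY → C Y tY) → C X tX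

/-- `SCH A` is the class of all subspaces of members of `CH A`. -/
def SCH (A : TopClass.{u}) : TopClass.{u} :=
  fun X tX => ∃ (Y : Type u) (tY : TopologicalSpace Y) (f : X → Y),
    CH A Y tY ∧ @Topology.IsEmbedding X Y tX tY f

/-- The class consisting of (the spaces homeomorphic to) a single space `A`. -/
def singleClass (A : Type u) (tA : TopologicalSpace A) : TopClass.{u} :=
  fun Y tY => Nonempty (@Homeomorph Y A tY tA)

/-- A class of topological spaces is hereditary if it is closed under subspaces. -/
def IsHereditary (C : TopClass.{u}) : Prop :=
  ∀ (X : Type u) (tX : TopologicalSpace X), C X tX →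
    ∀ (Z : Type u) (tZ : TopologicalSpace Z) (f : Z → X), @Topology.IsEmbedding Z X tZ tX f →
      C Z tZ

/-- The class `FG` of finitely generated (Alexandrov-discrete) topological spaces. -/
def FGClass : TopClass.{u} := fun X tX => @AlexandrovDiscrete X tX

/-- A filter subspace of a filter space `A` with accumulation point `a`: a subset containing `a`
such that `a` is in the closure of `B \ {a}`. -/
def IsFilterSubspace (A : Type u) [TopologicalSpace A] (a : A) (B : Set A) : Prop :=
  a ∈ B ∧ a ∈ closure (B \ {a})

/-- The `A`-closure of `M ⊆ X`: points reachable as `f a` for a continuous map `f : B → X`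
from a filter subspace `B` of `A` sending `B \ {a}` into `M`. -/
def AClosureStep (A : Type u) [TopologicalSpace A] (a : A) {X : Type u} [TopologicalSpace X]
    (M : Set X) : Set X :=
  {x | ∃ (B : Set A) (hB : IsFilterSubspace A a B) (f : B → X),
    Continuous f ∧ (∀ b : B, (b : A) ≠ a → f b ∈ M) ∧ f ⟨a, hB.1⟩ = x}

/-- The `β`-th iterated `A`-closure `M_β` of `M`, defined by transfinite recursion. -/
noncomputable def AClosureIter (A : Type u) [TopologicalSpace A] (a : A) {X : Type u}
    [TopologicalSpace X] (M : Set X) (β : Ordinal.{u}) : Set X :=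
  Ordinal.limitRecOn β M (fun _ ih => AClosureStep A a ih)
    (fun o _ ih => ⋃ (γ : Ordinal.{u}) (h : γ < o), ih γ h)

/-- The transfinite `A`-closure `M̃ = ⋃_{β ∈ On} M_β` of `M`. -/
noncomputable def ATilde (A : Type u) [TopologicalSpace A] (a : A) {X : Type u}
    [TopologicalSpace X] (M : Set X) : Set X :=
  ⋃ β : Ordinal.{u}, AClosureIter A a M β


/-!
`CH {A}` consists of the `A`-generated spaces (`IsGeneratedBy`): they form a coreflective class
containing `A`, and each of them is a quotient of a sum of copies of `A`. In such a space `N` is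
closed iff `f ⁻¹' N` is closed for every continuous `f : A → X`. As all points of `A` but `a` are
isolated and every filter subspace is a retract of `A`, this holds iff `N` is closed under the
`A`-closure step. Hence `M̃`, the least superset of `M` closed under that step, is the closure of
`M` exactly when `X` is `A`-generated.
-/

open Set Topology

section GeneratedBy

variable {ι : Type*} (Z : ι → Type u) [∀ i, TopologicalSpace (Z i)]

theorem isCoreflective_isGeneratedBy : IsCoreflective fun Y tY => IsGeneratedBy Z Y (tY := tY) :=
  ⟨fun _ _ _ _ => Sigma.isGeneratedBy, fun _ _ _ _ _ hq _ => hq.isGeneratedBy⟩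

theorem isGeneratedBy_iff_isClosed {Y : Type*} [TopologicalSpace Y] :
    IsGeneratedBy Z Y ↔
      ∀ N : Set Y, (∀ ⦃i : ι⦄ (f : C(Z i, Y)), IsClosed (f ⁻¹' N)) → IsClosed N := by
  refine ⟨fun _ N => (IsGeneratedBy.isClosed_iff Z).2, fun h => ?_⟩
  rw [IsGeneratedBy.iff_le_generatedBy]
  intro U hU
  simp only [isOpen_iSup_iff, isOpen_coinduced] at hU
  rw [← isClosed_compl_iff]
  exact h _ fun i f => (hU i f).isClosed_compl

end GeneratedBy

theorem mem_CH_singleClass_iff_isGeneratedBy {A : Type u} [tA : TopologicalSpace A] [Nonempty A]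
    {X : Type u} [tX : TopologicalSpace X] :
    CH (singleClass A tA) X tX ↔ IsGeneratedBy (fun _ : Unit => A) X := by
  constructor
  · intro h
    refine h _ (isCoreflective_isGeneratedBy _) fun Y tY ⟨e⟩ => ?_
    have := IsGeneratedBy.inst (X := fun _ : Unit => A) ()
    exact e.symm.isQuotientMap.isGeneratedBy
  · intro h C hC hAC
    have hsum := hC.1 ((_ : Unit) × C(A, X)) (fun _ => A) (fun _ => tA)
      fun _ => hAC A tA ⟨Homeomorph.refl A⟩
    refine hC.2 _ X _ tX (fun p => p.1.2 p.2) ⟨⟨?_⟩, ?_⟩ hsum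
    · exact IsGeneratedBy.generatedBy_eq.symm.trans (TopologicalSpace.generatedBy_eq_coinduced _)
    · intro x
      exact ⟨⟨⟨(), ContinuousMap.const A x⟩, Classical.arbitrary A⟩, rfl⟩

section AClosure

variable {A : Type u} [TopologicalSpace A] {a : A} {X : Type u} [TopologicalSpace X]

theorem IsFilterSpace.isFilterSubspace_univ (hA : IsFilterSpace A a) :
    IsFilterSubspace A a univ :=
  ⟨trivial, by rw [← compl_eq_univ_sdiff]; exact dense_compl_singleton_iff_not_open.2 hA.1 a⟩

theorem IsFilterSpace.mem_of_mem_closure (hA : IsFilterSpace A a) {S : Set A} {x : A}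
    (hx : x ∈ closure S) (hxa : x ≠ a) : x ∈ S := by
  obtain ⟨_, rfl, hyS⟩ := mem_closure_iff.1 hx {x} (hA.2 x hxa) rfl
  exact hyS

/-- Collapse the complement of `B` to `a`. -/
theorem IsFilterSpace.exists_retraction (hA : IsFilterSpace A a) {B : Set A} (ha : a ∈ B) :
    ∃ r : C(A, B), ∀ b : B, r b = b := by
  classical
  let r : A → B := fun x => if hx : x ∈ B then ⟨x, hx⟩ else ⟨a, ha⟩
  refine ⟨⟨r, continuous_iff_continuousAt.2 fun x => ?_⟩, fun b => dif_pos b.2⟩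
  by_cases hxa : x = a
  · subst hxa
    have hra : (r x : A) = x := by simp [r, ha]
    rw [ContinuousAt, tendsto_subtype_rng, hra]
    refine fun W hW => Filter.mem_map.2 (Filter.mem_of_superset hW fun y hy => ?_)
    by_cases hyB : y ∈ B
    · simpa [r, hyB] using hy
    · simpa [r, hyB] using mem_of_mem_nhds hW
  · rw [ContinuousAt, (isOpen_singleton_iff_nhds_eq_pure x).1 (hA.2 x hxa)]
    exact tendsto_pure_nhds r x

theorem aClosureStep_mono {M N : Set X} (h : M ⊆ N) :
    AClosureStep A a M ⊆ AClosureStep A a N := by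
  rintro x ⟨B, hB, f, hf, hM, rfl⟩
  exact ⟨B, hB, f, hf, fun b hb => h (hM b hb), rfl⟩

theorem IsFilterSpace.subset_aClosureStep (hA : IsFilterSpace A a) (M : Set X) :
    M ⊆ AClosureStep A a M :=
  fun x hx => ⟨univ, hA.isFilterSubspace_univ, fun _ => x, continuous_const, fun _ _ => hx, rfl⟩

theorem aClosureStep_subset_closure (M : Set X) : AClosureStep A a M ⊆ closure M := by
  rintro x ⟨B, hB, f, hf, hM, rfl⟩
  have ha : (⟨a, hB.1⟩ : B) ∈ closure {b : B | (b : A) ≠ a} := by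
    rw [closure_subtype]
    refine closure_mono ?_ hB.2
    rintro y ⟨hyB, hya⟩
    exact ⟨⟨y, hyB⟩, hya, rfl⟩
  exact map_mem_closure hf ha hM

end AClosure

section Transfinite

variable {A : Type u} [TopologicalSpace A] {a : A} {X : Type u} [TopologicalSpace X] (M : Set X)

theorem aClosureIter_zero : AClosureIter A a M 0 = M :=
  Ordinal.limitRecOn_zero _ _ _

theorem aClosureIter_add_one (β : Ordinal.{u}) :
    AClosureIter A a M (β + 1) = AClosureStep A a (AClosureIter A a M β) :=
  Ordinal.limitRecOn_add_one _ _ _ _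

theorem aClosureIter_limit {o : Ordinal.{u}} (ho : Order.IsSuccLimit o) :
    AClosureIter A a M o = ⋃ (β : Ordinal.{u}) (_ : β < o), AClosureIter A a M β :=
  Ordinal.limitRecOn_limit _ _ _ _ ho

theorem IsFilterSpace.monotone_aClosureIter (hA : IsFilterSpace A a) :
    Monotone (AClosureIter A a M) := by
  intro β γ hβγ
  induction γ using Ordinal.limitRecOn with
  | zero => rw [nonpos_iff_eq_zero.1 hβγ]
  | add_one γ ih =>
    rcases hβγ.eq_or_lt with rfl | hlt
    · rfl
    · rw [aClosureIter_add_one]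
      exact (ih (Order.lt_add_one_iff.1 hlt)).trans (hA.subset_aClosureStep _)
  | limit γ hγ _ =>
    rcases hβγ.eq_or_lt with rfl | hlt
    · rfl
    · rw [aClosureIter_limit M hγ]
      exact subset_biUnion_of_mem (u := fun β => AClosureIter A a M β) hlt

variable {M} {N : Set X}

theorem aClosureIter_subset (hMN : M ⊆ N) (hN : AClosureStep A a N ⊆ N) (β : Ordinal.{u}) :
    AClosureIter A a M β ⊆ N := by
  induction β using Ordinal.limitRecOn with
  | zero => rwa [aClosureIter_zero]
  | add_one β ih => exact (aClosureIter_add_one M β).trans_subset ((aClosureStep_mono ih).trans hN)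
  | limit β hβ ih =>
    rw [aClosureIter_limit M hβ]
    exact iUnion₂_subset ih

theorem subset_aTilde : M ⊆ ATilde A a M :=
  subset_iUnion_of_subset 0 (aClosureIter_zero M).superset

theorem aTilde_subset (hMN : M ⊆ N) (hN : AClosureStep A a N ⊆ N) : ATilde A a M ⊆ N :=
  iUnion_subset (aClosureIter_subset hMN hN)

theorem aTilde_subset_closure : ATilde A a M ⊆ closure M :=
  aTilde_subset subset_closure ((aClosureStep_subset_closure _).trans closure_closure.subset)

/-- Each of the (set-many) points of `B \ {a}` is reached at some stage; their supremum is a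
stage at which the whole image already lies. -/
theorem IsFilterSpace.aClosureStep_aTilde_subset (hA : IsFilterSpace A a) :
    AClosureStep A a (ATilde A a M) ⊆ ATilde A a M := by
  rintro x ⟨B, hB, f, hf, hM, rfl⟩
  have hstage : ∀ b : B, ∃ β : Ordinal.{u}, (b : A) ≠ a → f b ∈ AClosureIter A a M β := by
    intro b
    by_cases hb : (b : A) = a
    · exact ⟨0, fun h => absurd hb h⟩
    · obtain ⟨β, hβ⟩ := mem_iUnion.1 (hM b hb)
      exact ⟨β, fun _ => hβ⟩
  choose stage hstage using hstage
  refine mem_iUnion.2 ⟨(⨆ b, stage b) + 1, ?_⟩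
  rw [aClosureIter_add_one]
  exact ⟨B, hB, f, hf,
    fun b hb => hA.monotone_aClosureIter M (Ordinal.le_iSup stage b) (hstage b hb), rfl⟩

end Transfinite

section Closure

variable {A : Type u} [TopologicalSpace A] {a : A} {X : Type u} [TopologicalSpace X] {N : Set X}

theorem IsFilterSpace.isClosed_preimage (hA : IsFilterSpace A a) {f : A → X} (hf : Continuous f)
    (hN : AClosureStep A a N ⊆ N) : IsClosed (f ⁻¹' N) := by
  rw [← closure_subset_iff_isClosed]
  intro y hy
  by_cases hya : y = a
  · subst hya
    by_contra hfy
    have hB : IsFilterSubspace A y (insert y (f ⁻¹' N)) :=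
      ⟨mem_insert _ _, by rwa [insert_sdiff_self_of_notMem hfy]⟩
    exact hfy (hN ⟨_, hB, fun b => f b, hf.comp continuous_subtype_val,
      fun b hb => b.2.resolve_left hb, rfl⟩)
  · exact hA.mem_of_mem_closure hy hya

theorem IsFilterSpace.aClosureStep_subset (hA : IsFilterSpace A a)
    (hN : ∀ f : C(A, X), IsClosed (f ⁻¹' N)) : AClosureStep A a N ⊆ N := by
  rintro x ⟨B, hB, g, hg, hgN, rfl⟩
  obtain ⟨r, hr⟩ := hA.exists_retraction hB.1
  have hBN : B \ {a} ⊆ (g ∘ r) ⁻¹' N := fun b hb => by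
    simpa [hr ⟨b, hb.1⟩] using hgN ⟨b, hb.1⟩ hb.2
  have haN := (hN ((⟨g, hg⟩ : C(B, X)).comp r)).closure_subset_iff.2 hBN hB.2
  simpa [hr ⟨a, hB.1⟩] using haN

theorem IsFilterSpace.isGeneratedBy_iff_closure_eq_aTilde (hA : IsFilterSpace A a) :
    IsGeneratedBy (fun _ : Unit => A) X ↔ ∀ M : Set X, closure M = ATilde A a M := by
  constructor
  · intro hX M
    refine aTilde_subset_closure.antisymm' (closure_minimal subset_aTilde ?_)
    exact (isGeneratedBy_iff_isClosed _).1 hX _ fun _ f =>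
      hA.isClosed_preimage f.continuous hA.aClosureStep_aTilde_subset
  · intro h
    refine (isGeneratedBy_iff_isClosed _).2 fun N hN => ?_
    rw [← closure_subset_iff_isClosed, h N]
    exact aTilde_subset subset_rfl (hA.aClosureStep_subset fun f => @hN () f)

end Closure

/-- For a filter space `A` with accumulation point `a`, a topological space `X`
belongs to `CH {A}` iff for every `M ⊆ X` the closure of `M` equals the transfinite
`A`-closure `M̃`. -/
theorem stmt3 (A : Type u) [tA : TopologicalSpace A] (a : A) (hA : IsFilterSpace A a)
    (X : Type u) [tX : TopologicalSpace X] :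
    CH (singleClass A tA) X tX ↔ ∀ M : Set X, closure M = ATilde A a M := by
  have : Nonempty A := ⟨a⟩
  rw [mem_CH_singleClass_iff_isGeneratedBy]
  exact hA.isGeneratedBy_iff_closure_eq_aTilde
end

section
/- Let A be a filter space with accumulation point a which is not finitely generated, and let α be the tightness of A (which is then an infinite cardinal). If X belongs to CH({A}), then for every subset M ⊆ X the iterated A-closure M_{α⁺} (where α⁺ is the successor cardinal of α) equals the closure of M in X. -/
universe u v

/-- The tightness of a space `A`: the least cardinal `κ` such that whenever `x ∈ closure C`
there is `D ⊆ C` with `#D ≤ κ` and `x ∈ closure D`. -/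
noncomputable def tightness (A : Type u) [TopologicalSpace A] : Cardinal.{u} :=
  sInf {κ : Cardinal.{u} | ∀ (C : Set A) (x : A), x ∈ closure C →
    ∃ D : Set A, D ⊆ C ∧ Cardinal.mk D ≤ κ ∧ x ∈ closure D}

/-! Every step of the `A`-closure stays inside the topological closure, so `M_β ⊆ closure M`.
Conversely, a point of `M_{β+1}` is witnessed by a filter subspace `B`, and by tightness
`B \ {a}` may be shrunk to at most `α` points. These lie in `M_γ` for some `γ < α⁺` because `α⁺`
is regular, so `M_{α⁺}` is closed under the `A`-closure step. Membership in `CH {A}` means that a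
set whose preimages under all continuous maps `A → X` are closed is itself closed; since all
points of `A` but `a` are isolated, this applies to every set closed under the `A`-closure step,
in particular to `M_{α⁺}`. The tightness `α` is infinite because a space of finite tightness is
Alexandrov-discrete. -/

open Set Cardinal

section Tightness

variable {A : Type u} [TopologicalSpace A]

lemma exists_subset_mk_le_tightness {C : Set A} {x : A} (hx : x ∈ closure C) :
    ∃ D ⊆ C, #D ≤ tightness A ∧ x ∈ closure D :=
  csInf_mem (s := {κ : Cardinal.{u} | ∀ (C : Set A) (x : A), x ∈ closure C →
      ∃ D : Set A, D ⊆ C ∧ #D ≤ κ ∧ x ∈ closure D})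
    ⟨#A, fun C _ hx => ⟨C, subset_rfl, mk_set_le C, hx⟩⟩ C x hx

lemma alexandrovDiscrete_of_tightness_lt_aleph0 (h : tightness A < ℵ₀) :
    AlexandrovDiscrete A := by
  refine alexandrovDiscrete_iff_isClosed.2 fun S hS => isClosed_of_closure_subset fun x hx => ?_
  obtain ⟨D, hDS, hDcard, hxD⟩ := exists_subset_mk_le_tightness hx
  have hDfin : D.Finite := lt_aleph0_iff_set_finite.mp (hDcard.trans_lt h)
  rw [← biUnion_of_singleton D, hDfin.closure_biUnion, mem_iUnion₂] at hxD
  obtain ⟨d, hd, hxd⟩ := hxD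
  obtain ⟨s, hs, hds⟩ := hDS hd
  exact ⟨s, hs, (hS s hs).closure_subset_iff.2 (singleton_subset_iff.2 hds) hxd⟩

end Tightness

section FilterSpace

variable {A : Type u} [TopologicalSpace A] {a : A}

lemma IsFilterSpace.isClosed_of_mem_closure (hA : IsFilterSpace A a) {P : Set A}
    (h : a ∈ closure P → a ∈ P) : IsClosed P :=
  isClosed_of_closure_subset fun x hx => by
    by_cases hxa : x = a
    · subst hxa
      exact h hx
    · obtain ⟨y, rfl, hy⟩ := mem_closure_iff.mp hx {x} (hA.2 x hxa) rfl
      exact hy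

lemma isFilterSubspace_univ (ha : ¬IsOpen ({a} : Set A)) : IsFilterSubspace A a univ := by
  refine ⟨mem_univ a, ?_⟩
  rw [← compl_eq_univ_sdiff, closure_compl]
  intro haint
  exact ha (isOpen_iff_mem_nhds.2 fun x hx => by
    rw [mem_singleton_iff.1 hx]
    exact mem_interior_iff_mem_nhds.1 haint)

end FilterSpace

section AClosure

variable {A : Type u} [TopologicalSpace A] {a : A} {X : Type u} [TopologicalSpace X]

lemma AClosureIter_zero (M : Set X) : AClosureIter A a M 0 = M := by
  simp [AClosureIter]

lemma AClosureIter_succ (M : Set X) (β : Ordinal.{u}) :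
    AClosureIter A a M (Order.succ β) = AClosureStep A a (AClosureIter A a M β) := by
  simp [AClosureIter]

lemma AClosureIter_limit (M : Set X) {o : Ordinal.{u}} (ho : Order.IsSuccLimit o) :
    AClosureIter A a M o = ⋃ γ < o, AClosureIter A a M γ := by
  rw [AClosureIter, Ordinal.limitRecOn_limit _ _ _ _ ho]
  rfl

lemma subset_AClosureStep (ha : ¬IsOpen ({a} : Set A)) (M : Set X) :
    M ⊆ AClosureStep A a M :=
  fun x hx => ⟨univ, isFilterSubspace_univ ha, fun _ => x, continuous_const, fun _ _ => hx, rfl⟩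

lemma AClosureIter_monotone (ha : ¬IsOpen ({a} : Set A)) (M : Set X) :
    Monotone (AClosureIter A a M) := by
  intro β γ hβγ
  induction γ using Ordinal.limitRecOn with
  | zero => rw [nonpos_iff_eq_zero.mp hβγ]
  | add_one γ ih =>
    rcases hβγ.lt_or_eq with h | rfl
    · rw [← Order.succ_eq_add_one, AClosureIter_succ]
      exact (ih (Order.lt_add_one_iff.mp h)).trans (subset_AClosureStep ha _)
    · rfl
  | limit γ hγ ih =>
    rcases hβγ.lt_or_eq with h | rfl
    · rw [AClosureIter_limit M hγ]
      exact subset_iUnion₂ (s := fun γ _ => AClosureIter A a M γ) β h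
    · rfl

lemma AClosureStep_subset_closure (S : Set X) : AClosureStep A a S ⊆ closure S := by
  rintro _ ⟨B, hB, f, hf, hfS, rfl⟩
  have haB : (⟨a, hB.1⟩ : B) ∈ closure {b : B | (b : A) ≠ a} := by
    rw [closure_subtype]
    convert hB.2 using 2
    ext y
    simp [and_comm]
  exact closure_mono (image_subset_iff.2 fun b hb => hfS b hb)
    (image_closure_subset_closure_image hf (mem_image_of_mem f haB))

lemma AClosureIter_subset_closure (M : Set X) (β : Ordinal.{u}) :
    AClosureIter A a M β ⊆ closure M := by
  induction β using Ordinal.limitRecOn with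
  | zero => rw [AClosureIter_zero]; exact subset_closure
  | add_one β ih =>
    rw [← Order.succ_eq_add_one, AClosureIter_succ]
    exact (AClosureStep_subset_closure _).trans (closure_minimal ih isClosed_closure)
  | limit β hβ ih =>
    rw [AClosureIter_limit M hβ]
    exact iUnion₂_subset ih

lemma mem_AClosureStep_of_mem_closure {B : Set A} (haB : a ∈ B) {f : B → X} (hf : Continuous f)
    {D : Set A} (hDB : D ⊆ B \ {a}) (haD : a ∈ closure D) {N : Set X}
    (hfD : ∀ b : B, (b : A) ∈ D → f b ∈ N) : f ⟨a, haB⟩ ∈ AClosureStep A a N := by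
  have hD'B : insert a D ⊆ B := insert_subset haB (hDB.trans sdiff_subset)
  have hD' : IsFilterSubspace A a (insert a D) :=
    ⟨mem_insert a D, by rwa [insert_sdiff_self_of_notMem fun h => (hDB h).2 rfl]⟩
  refine ⟨insert a D, hD', f ∘ inclusion hD'B, hf.comp (continuous_inclusion hD'B), ?_, rfl⟩
  rintro ⟨b, hb⟩ hba
  exact hfD _ ((mem_insert_iff.mp hb).resolve_left hba)

lemma exists_lt_forall_mem_AClosureIter (ha : ¬IsOpen ({a} : Set A)) {M : Set X}
    {o : Ordinal.{u}} (ho : Order.IsSuccLimit o) {ι : Type u} {s : ι → X} (hι : #ι < o.cof)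
    (hs : ∀ i, s i ∈ AClosureIter A a M o) : ∃ γ < o, ∀ i, s i ∈ AClosureIter A a M γ := by
  simp_rw [AClosureIter_limit M ho, mem_iUnion₂] at hs
  choose g hgo hg using hs
  exact ⟨⨆ i, g i, Ordinal.iSup_lt_of_lt_cof hι hgo, fun i =>
    AClosureIter_monotone ha M (le_ciSup Ordinal.bddAbove_of_small i) (hg i)⟩

lemma AClosureStep_AClosureIter_subset (ha : ¬IsOpen ({a} : Set A)) {o : Ordinal.{u}}
    (ho : Order.IsSuccLimit o) (hcof : tightness A < o.cof) (M : Set X) :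
    AClosureStep A a (AClosureIter A a M o) ⊆ AClosureIter A a M o := by
  rintro _ ⟨B, hB, f, hf, hfB, rfl⟩
  obtain ⟨D, hDB, hD, haD⟩ := exists_subset_mk_le_tightness hB.2
  obtain ⟨γ, hγo, hγ⟩ := exists_lt_forall_mem_AClosureIter ha ho (hD.trans_lt hcof)
    (s := fun d : D => f ⟨d, (hDB d.2).1⟩) fun d => hfB _ (hDB d.2).2
  have hsucc : f ⟨a, hB.1⟩ ∈ AClosureIter A a M (Order.succ γ) := by
    rw [AClosureIter_succ]
    exact mem_AClosureStep_of_mem_closure hB.1 hf hDB haD fun b hb => hγ ⟨b, hb⟩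
  exact AClosureIter_monotone ha M (ho.succ_lt hγo).le hsucc

end AClosure

section CoreflectiveHull

variable {A : Type u} [tA : TopologicalSpace A] {X : Type u} [tX : TopologicalSpace X]

lemma isClosed_of_forall_isClosed_preimage (hX : CH (singleClass A tA) X tX) (S : Set X)
    (hS : ∀ f : A → X, Continuous f → IsClosed (f ⁻¹' S)) : IsClosed S := by
  let C : TopClass.{u} := fun Y tY =>
    ∀ T : Set Y, (∀ f : A → Y, @Continuous A Y tA tY f → IsClosed (f ⁻¹' T)) →
      @IsClosed Y tY T
  refine hX C ⟨?_, ?_⟩ ?_ S hS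
  · exact fun ι Y t hY T hT => isClosed_sigma_iff.2 fun i =>
      hY i _ fun g hg => hT _ (continuous_sigmaMk.comp hg)
  · exact fun Y Z tY tZ q hq hY T hT => hq.isClosed_preimage.1 <|
      hY _ fun g hg => hT (q ∘ g) (hq.continuous.comp hg)
  · rintro Y tY ⟨h⟩ T hT
    simpa using (hT _ h.symm.continuous).preimage h.continuous

lemma isClosed_of_AClosureStep_subset {a : A} (hA : IsFilterSpace A a)
    (hX : CH (singleClass A tA) X tX) {S : Set X} (hS : AClosureStep A a S ⊆ S) : IsClosed S :=
  isClosed_of_forall_isClosed_preimage hX S fun f hf => hA.isClosed_of_mem_closure fun haS => by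
    by_contra hfa
    refine hfa (hS (mem_AClosureStep_of_mem_closure (B := univ) (mem_univ a)
      (hf.comp continuous_subtype_val) ?_ haS fun b hb => hb))
    rintro b hb
    exact ⟨mem_univ b, by rintro rfl; exact hfa hb⟩

end CoreflectiveHull

/-- Let `A` be a filter space with accumulation point `a` which is not finitely
generated and let `α` be the tightness of `A`.  If `X ∈ CH {A}`, then for every `M ⊆ X` the
iterated `A`-closure `M_{α⁺}` (at the initial ordinal of the successor cardinal `α⁺`) equals
the closure of `M` in `X`. -/
theorem stmt4 (A : Type u) [tA : TopologicalSpace A] (a : A) (hA : IsFilterSpace A a)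
    (hfg : ¬ AlexandrovDiscrete A)
    (X : Type u) [tX : TopologicalSpace X] (hX : CH (singleClass A tA) X tX) :
    ∀ M : Set X, AClosureIter A a M (Order.succ (tightness A)).ord = closure M := by
  intro M
  have ht : ℵ₀ ≤ tightness A := not_lt.1 (mt alexandrovDiscrete_of_tightness_lt_aleph0 hfg)
  have ho : Order.IsSuccLimit (Order.succ (tightness A)).ord :=
    isSuccLimit_ord (ht.trans (Order.le_succ _))
  have hcof : tightness A < (Order.succ (tightness A)).ord.cof := by
    rw [(isRegular_succ ht).cof_ord]
    exact Order.lt_succ _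
  refine (AClosureIter_subset_closure M _).antisymm (closure_minimal ?_ ?_)
  · simpa only [AClosureIter_zero] using AClosureIter_monotone hA.1 M zero_le
  · exact isClosed_of_AClosureStep_subset hA hX (AClosureStep_AClosureIter_subset hA.1 ho hcof M)
end

section
/- Let A be a filter space with accumulation point a and B = A \ {a}. For each b ∈ B let f_b : X_b → Y_b be a map between topological spaces with f_b(x_b) = y_b for chosen points x_b ∈ X_b, y_b ∈ Y_b, and let Σf_b : Σ_A(X_b, x_b) → Σ_A(Y_b, y_b) be the induced map defined by (Σf_b)(b, x) = (b, f_b(x)) for x ∈ X_b \ {x_b} and (Σf_b)(x) = x for x ∈ A. If every f_b is continuous, then Σf_b is continuous; if every f_b is a quotient map, then Σf_b is a quotient map. -/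
universe u

/-- The underlying set `F = A ∪ ⋃_{b ∈ B} {b} × (X_b \ {x_b})` of the `A`-sum, where
`B = A \ {a}`. -/
def ASumPt (A : Type u) (a : A) (X : {b : A // b ≠ a} → Type u)
    (x : (b : {b : A // b ≠ a}) → X b) : Type u :=
  A ⊕ (Σ b : {b : A // b ≠ a}, {y : X b // y ≠ x b})

open scoped Classical in
/-- The defining map `φ : A ⊔ (⊔_{b ∈ B} X_b) → F` of the `A`-sum. -/
noncomputable def asumDefiningMap (A : Type u) (a : A) (X : {b : A // b ≠ a} → Type u)
    (x : (b : {b : A // b ≠ a}) → X b) :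
    (A ⊕ (Σ b : {b : A // b ≠ a}, X b)) → ASumPt A a X x :=
  fun z => match z with
  | Sum.inl p => Sum.inl p
  | Sum.inr ⟨b, y⟩ => if h : y = x b then Sum.inl b.1 else Sum.inr ⟨b, ⟨y, h⟩⟩

/-- The `A`-sum `Σ_A(X_b, x_b)`: the quotient topology on `F` with respect to the defining
map `φ`. -/
noncomputable instance asumTop (A : Type u) [TopologicalSpace A] (a : A)
    (X : {b : A // b ≠ a} → Type u) [(b : {b : A // b ≠ a}) → TopologicalSpace (X b)]
    (x : (b : {b : A // b ≠ a}) → X b) : TopologicalSpace (ASumPt A a X x) :=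
  TopologicalSpace.coinduced (asumDefiningMap A a X x) inferInstance

open scoped Classical in
/-- The induced map `Σ f_b` between `A`-sums, sending `(b, v)` to `(b, f_b v)` (which is the
point `b ∈ A` of the target when `f_b v = y b`) and fixing the points of `A`. -/
noncomputable def asumMap (A : Type u) (a : A) (X Y : {b : A // b ≠ a} → Type u)
    (x : (b : {b : A // b ≠ a}) → X b) (y : (b : {b : A // b ≠ a}) → Y b)
    (f : (b : {b : A // b ≠ a}) → X b → Y b) : ASumPt A a X x → ASumPt A a Y y :=
  fun z => match z with
  | Sum.inl p => Sum.inl p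
  | Sum.inr ⟨b, v⟩ =>
      if h : f b v.1 = y b then Sum.inl b.1 else Sum.inr ⟨b, ⟨f b v.1, h⟩⟩

/-
The defining map `φ` of an `A`-sum is a quotient map by construction, and the induced map
`Σ f_b` fits into a commutative square `Σ f_b ∘ φ = φ ∘ (id ⊔ ⊔_b f_b)`, because `f_b` sends the
base point `x_b` to `y_b`. A disjoint union of continuous (resp. quotient) maps is continuous
(resp. a quotient map), and both properties descend along the quotient map `φ`.
-/

namespace Topology

variable {X Y Z W : Type*} [TopologicalSpace X] [TopologicalSpace Y] [TopologicalSpace Z]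
  [TopologicalSpace W]

theorem IsQuotientMap.sumMap {f : X → Y} {g : Z → W} (hf : IsQuotientMap f)
    (hg : IsQuotientMap g) : IsQuotientMap (Sum.map f g) := by
  refine ⟨.of_isOpen_preimage_iff_isOpen fun s => ?_, hf.surjective.sumMap hg.surjective⟩
  simp only [isOpen_sum_iff]
  exact and_congr (hf.isOpen_preimage (s := Sum.inl ⁻¹' s))
    (hg.isOpen_preimage (s := Sum.inr ⁻¹' s))

theorem IsQuotientMap.sigmaMap {ι : Type*} {X Y : ι → Type*} [∀ i, TopologicalSpace (X i)]
    [∀ i, TopologicalSpace (Y i)] {f : ∀ i, X i → Y i} (hf : ∀ i, IsQuotientMap (f i)) :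
    IsQuotientMap (Sigma.map id f) := by
  refine ⟨.of_isOpen_preimage_iff_isOpen fun s => ?_,
    Function.surjective_id.sigma_map fun i => (hf i).surjective⟩
  simp only [isOpen_sigma_iff]
  exact forall_congr' fun i => (hf i).isOpen_preimage (s := Sigma.mk i ⁻¹' s)

variable {X' Y' : Type*} [TopologicalSpace X'] [TopologicalSpace Y']
  {p : X' → X} {q : Y' → Y} {f : X → Y} {g : X' → Y'}

theorem IsQuotientMap.continuous_of_comp_eq (hp : IsQuotientMap p) (hq : IsQuotientMap q)
    (hsq : f ∘ p = q ∘ g) (hg : Continuous g) : Continuous f := by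
  rw [hp.continuous_iff, hsq]
  exact hq.continuous.comp hg

theorem IsQuotientMap.of_comp_eq (hp : IsQuotientMap p) (hq : IsQuotientMap q)
    (hsq : f ∘ p = q ∘ g) (hg : IsQuotientMap g) : IsQuotientMap f := by
  refine .of_comp hp.continuous (hp.continuous_of_comp_eq hq hsq hg.continuous) ?_
  rw [hsq]
  exact hq.comp hg

end Topology

open Topology

section ASum

variable {A : Type u} {a : A} {X Y : {b : A // b ≠ a} → Type u} {x : ∀ b, X b} {y : ∀ b, Y b}

theorem asumDefiningMap_surjective : Function.Surjective (asumDefiningMap A a X x) := by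
  rintro (p | ⟨b, v, hv⟩)
  · exact ⟨Sum.inl p, rfl⟩
  · exact ⟨Sum.inr ⟨b, v⟩, by simp [asumDefiningMap, hv]; rfl⟩

theorem isQuotientMap_asumDefiningMap [TopologicalSpace A] [∀ b, TopologicalSpace (X b)] :
    IsQuotientMap (asumDefiningMap A a X x) :=
  ⟨⟨rfl⟩, asumDefiningMap_surjective⟩

theorem asumMap_comp_asumDefiningMap {f : ∀ b, X b → Y b} (hf : ∀ b, f b (x b) = y b) :
    asumMap A a X Y x y f ∘ asumDefiningMap A a X x =
      asumDefiningMap A a Y y ∘ Sum.map id (Sigma.map id f) := by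
  funext z
  rcases z with p | ⟨b, v⟩
  · rfl
  · by_cases hv : v = x b
    · subst hv
      simp [asumDefiningMap, asumMap, Sigma.map, hf b]; rfl
    · by_cases hfv : f b v = y b <;>
        simp [asumDefiningMap, asumMap, Sigma.map, hv, hfv] <;> rfl

end ASum

theorem stmt6_general (A : Type u) [TopologicalSpace A] (a : A)
    (X Y : {b : A // b ≠ a} → Type u) [(b : {b : A // b ≠ a}) → TopologicalSpace (X b)]
    [(b : {b : A // b ≠ a}) → TopologicalSpace (Y b)]
    (x : (b : {b : A // b ≠ a}) → X b) (y : (b : {b : A // b ≠ a}) → Y b)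
    (f : (b : {b : A // b ≠ a}) → X b → Y b) (hf : ∀ b, f b (x b) = y b) :
    ((∀ b, Continuous (f b)) → Continuous (asumMap A a X Y x y f)) ∧
    ((∀ b, Topology.IsQuotientMap (f b)) → Topology.IsQuotientMap (asumMap A a X Y x y f)) := by
  have hsq := asumMap_comp_asumDefiningMap hf
  refine ⟨fun hc => ?_, fun hq => ?_⟩
  · exact isQuotientMap_asumDefiningMap.continuous_of_comp_eq isQuotientMap_asumDefiningMap hsq
      (continuous_id.sumMap (.sigma_map hc))
  · exact isQuotientMap_asumDefiningMap.of_comp_eq isQuotientMap_asumDefiningMap hsq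
      (IsQuotientMap.id.sumMap (.sigmaMap hq))

/-- if all `f_b` are continuous then `Σ f_b` is continuous; if all `f_b` are
quotient maps then `Σ f_b` is a quotient map. -/
theorem stmt6 (A : Type u) [TopologicalSpace A] (a : A) (hA : IsFilterSpace A a)
    (X Y : {b : A // b ≠ a} → Type u) [(b : {b : A // b ≠ a}) → TopologicalSpace (X b)]
    [(b : {b : A // b ≠ a}) → TopologicalSpace (Y b)]
    (x : (b : {b : A // b ≠ a}) → X b) (y : (b : {b : A // b ≠ a}) → Y b)
    (f : (b : {b : A // b ≠ a}) → X b → Y b) (hf : ∀ b, f b (x b) = y b) :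
    ((∀ b, Continuous (f b)) → Continuous (asumMap A a X Y x y f)) ∧
    ((∀ b, Topology.IsQuotientMap (f b)) → Topology.IsQuotientMap (asumMap A a X Y x y f)) :=
  stmt6_general A a X Y x y f hf
end

section
/- Let A be a filter space with accumulation point a and B = A \ {a}. For each b ∈ B let f_b : X_b → Y_b be a map between topological spaces with f_b(x_b) = y_b for chosen points x_b ∈ X_b, y_b ∈ Y_b, and let Σf_b : Σ_A(X_b, x_b) → Σ_A(Y_b, y_b) be the induced map defined by (Σf_b)(b, x) = (b, f_b(x)) for x ∈ X_b \ {x_b} and (Σf_b)(x) = x for x ∈ A. If every f_b is a topological embedding, then Σf_b is a topological embedding; if every f_b is a homeomorphism, then Σf_b is a homeomorphism. -/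
universe u

/-!
Open sets of the `A`-sum are exactly the sets glued from an open `S ⊆ A` and open
`T_b ⊆ X_b` that agree at the identified points `x_b ~ b`, and `Σ f_b` pulls the set glued from
`(S, T_b)` back to the one glued from `(S, f_b⁻¹ T_b)`. This gives continuity; if every `f_b` is
inducing, an open set of the source is glued from some `(S, f_b⁻¹ T_b)` with `T_b` open, hence
is the preimage of the open set glued from `(S, T_b)`. Finally `Σ` is functorial, so it carries
homeomorphisms to homeomorphisms.
-/

namespace ASumPt

section Points

variable {A : Type u} {a : A} {X Y Z : {b : A // b ≠ a} → Type u}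
  {x : ∀ b, X b} {y : ∀ b, Y b} {z : ∀ b, Z b}

theorem ind {P : ASumPt A a X x → Prop} (inl : ∀ p : A, P (Sum.inl p))
    (inr : ∀ b (v : {v : X b // v ≠ x b}), P (Sum.inr ⟨b, v⟩)) (p : ASumPt A a X x) : P p := by
  rcases p with p | ⟨b, v⟩
  exacts [inl p, inr b v]

noncomputable def mk (x : ∀ b, X b) (b : {b : A // b ≠ a}) (v : X b) : ASumPt A a X x :=
  asumDefiningMap A a X x (Sum.inr ⟨b, v⟩)

theorem mk_self (b : {b : A // b ≠ a}) : mk x b (x b) = Sum.inl b.1 :=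
  dif_pos rfl

theorem mk_of_ne {b : {b : A // b ≠ a}} {v : X b} (h : v ≠ x b) :
    mk x b v = Sum.inr ⟨b, ⟨v, h⟩⟩ :=
  dif_neg h

def glue (x : ∀ b, X b) (S : Set A) (T : ∀ b, Set (X b)) : Set (ASumPt A a X x) :=
  {p | Sum.elim (· ∈ S) (fun s => s.2.1 ∈ T s.1) p}

/-- The base point `x_b` is glued to `b ∈ A`, so `S` and `T b` have to agree on it. -/
def Compatible (x : ∀ b, X b) (S : Set A) (T : ∀ b, Set (X b)) : Prop :=
  ∀ b, x b ∈ T b ↔ b.1 ∈ S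

theorem preimage_inl_glue (S : Set A) (T : ∀ b, Set (X b)) :
    (Sum.inl ⁻¹' glue x S T : Set A) = S :=
  rfl

theorem preimage_mk_glue {S : Set A} {T : ∀ b, Set (X b)} (hST : Compatible x S T)
    (b : {b : A // b ≠ a}) : mk x b ⁻¹' glue x S T = T b := by
  ext v
  by_cases hv : v = x b
  · subst hv
    rw [Set.mem_preimage, mk_self, hST b]
    rfl
  · rw [Set.mem_preimage, mk_of_ne hv]
    rfl

theorem glue_preimage (U : Set (ASumPt A a X x)) :
    glue x (Sum.inl ⁻¹' U) (fun b => mk x b ⁻¹' U) = U := by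
  ext p
  induction p using ind with
  | inl p => rfl
  | inr b v =>
    change mk x b v.1 ∈ U ↔ _
    rw [mk_of_ne v.2]

theorem compatible_preimage (U : Set (ASumPt A a X x)) :
    Compatible x (Sum.inl ⁻¹' U) (fun b => mk x b ⁻¹' U) := by
  intro b
  rw [Set.mem_preimage, mk_self]
  rfl

variable {f : ∀ b, X b → Y b} {g : ∀ b, Y b → Z b}

theorem asumMap_inl (p : A) : asumMap A a X Y x y f (Sum.inl p) = Sum.inl p :=
  rfl

theorem asumMap_inr (b : {b : A // b ≠ a}) (v : {v : X b // v ≠ x b}) :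
    asumMap A a X Y x y f (Sum.inr ⟨b, v⟩) = mk y b (f b v.1) :=
  rfl

theorem asumMap_mk (hf : ∀ b, f b (x b) = y b) (b : {b : A // b ≠ a}) (v : X b) :
    asumMap A a X Y x y f (mk x b v) = mk y b (f b v) := by
  by_cases hv : v = x b
  · subst hv
    rw [mk_self, asumMap_inl, hf, mk_self]
  · rw [mk_of_ne hv, asumMap_inr]

theorem asumMap_comp (hg : ∀ b, g b (y b) = z b) :
    asumMap A a Y Z y z g ∘ asumMap A a X Y x y f =
      asumMap A a X Z x z (fun b => g b ∘ f b) := by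
  funext p
  induction p using ind with
  | inl p => rfl
  | inr b v => exact asumMap_mk hg b (f b v.1)

theorem asumMap_id : asumMap A a X X x x (fun _ => id) = id := by
  funext p
  induction p using ind with
  | inl p => rfl
  | inr b v => exact mk_of_ne v.2

theorem Compatible.preimage {S : Set A} {T : ∀ b, Set (Y b)} (hST : Compatible y S T)
    (hf : ∀ b, f b (x b) = y b) :
    Compatible x S (fun b => f b ⁻¹' T b) := by
  intro b
  rw [Set.mem_preimage, hf b, hST b]

theorem asumMap_preimage_glue {S : Set A} {T : ∀ b, Set (Y b)} (hST : Compatible y S T) :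
    asumMap A a X Y x y f ⁻¹' glue y S T = glue x S (fun b => f b ⁻¹' T b) := by
  ext p
  induction p using ind with
  | inl p => rfl
  | inr b v =>
    change mk y b (f b v.1) ∈ glue y S T ↔ f b v.1 ∈ T b
    rw [← Set.mem_preimage, preimage_mk_glue hST]

theorem injective_asumMap (hf : ∀ b, f b (x b) = y b) (hinj : ∀ b, Function.Injective (f b)) :
    Function.Injective (asumMap A a X Y x y f) := by
  have hne : ∀ b (v : {v : X b // v ≠ x b}), f b v.1 ≠ y b := fun b v h =>
    v.2 (hinj b (h.trans (hf b).symm))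
  intro p q h
  induction p using ind with
  | inl p =>
    induction q using ind with
    | inl q => rw [Sum.inl.inj h]
    | inr c w => simp only [asumMap_inl, asumMap_inr, mk_of_ne (hne c w)] at h; cases h
  | inr b v =>
    induction q using ind with
    | inl q => simp only [asumMap_inl, asumMap_inr, mk_of_ne (hne b v)] at h; cases h
    | inr c w =>
      simp only [asumMap_inr, mk_of_ne (hne b v), mk_of_ne (hne c w)] at h
      obtain ⟨rfl, hvw⟩ := Sigma.mk.inj_iff.1 (Sum.inr.inj h)
      rw [Subtype.ext (hinj b (congrArg Subtype.val (eq_of_heq hvw)))]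

end Points

variable {A : Type u} [TopologicalSpace A] {a : A}
  {X Y : {b : A // b ≠ a} → Type u} [∀ b, TopologicalSpace (X b)] [∀ b, TopologicalSpace (Y b)]
  {x : ∀ b, X b} {y : ∀ b, Y b} {f : ∀ b, X b → Y b}

theorem isOpen_iff {U : Set (ASumPt A a X x)} :
    IsOpen U ↔ IsOpen (Sum.inl ⁻¹' U : Set A) ∧ ∀ b, IsOpen (mk x b ⁻¹' U) := by
  rw [isOpen_coinduced, isOpen_sum_iff, isOpen_sigma_iff]
  rfl

theorem isOpen_glue {S : Set A} {T : ∀ b, Set (X b)} (hST : Compatible x S T) :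
    IsOpen (glue x S T) ↔ IsOpen S ∧ ∀ b, IsOpen (T b) := by
  simp only [isOpen_iff, preimage_inl_glue, preimage_mk_glue hST]

theorem continuous_asumMap (hf : ∀ b, f b (x b) = y b) (hc : ∀ b, Continuous (f b)) :
    Continuous (asumMap A a X Y x y f) := by
  refine continuous_def.2 fun V hV => ?_
  have hV' := compatible_preimage V
  rw [← glue_preimage V] at hV ⊢
  rw [asumMap_preimage_glue hV', isOpen_glue (hV'.preimage hf)]
  obtain ⟨hS, hT⟩ := (isOpen_glue hV').1 hV
  exact ⟨hS, fun b => (hT b).preimage (hc b)⟩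

theorem isInducing_asumMap (hf : ∀ b, f b (x b) = y b)
    (hi : ∀ b, Topology.IsInducing (f b)) : Topology.IsInducing (asumMap A a X Y x y f) := by
  refine ⟨TopologicalSpace.ext_iff.2 fun U => ?_⟩
  rw [isOpen_induced_iff]
  refine ⟨fun hU => ?_, ?_⟩
  · obtain ⟨hS, hTx⟩ := (isOpen_glue (compatible_preimage U)).1 (by rwa [glue_preimage])
    choose T hT hfT using fun b => (hi b).isOpen_iff.1 (hTx b)
    have hST : Compatible y (Sum.inl ⁻¹' U) T := fun b => by
      rw [← hf b, ← Set.mem_preimage, hfT b]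
      exact compatible_preimage U b
    refine ⟨glue y _ T, (isOpen_glue hST).2 ⟨hS, hT⟩, ?_⟩
    rw [asumMap_preimage_glue hST]
    simp only [hfT, glue_preimage]
  · rintro ⟨V, hV, rfl⟩
    exact hV.preimage (continuous_asumMap hf fun b => (hi b).continuous)

theorem isEmbedding_asumMap (hf : ∀ b, f b (x b) = y b)
    (he : ∀ b, Topology.IsEmbedding (f b)) : Topology.IsEmbedding (asumMap A a X Y x y f) :=
  ⟨isInducing_asumMap hf fun b => (he b).isInducing,
    injective_asumMap hf fun b => (he b).injective⟩

theorem isHomeomorph_asumMap (hf : ∀ b, f b (x b) = y b) (hh : ∀ b, IsHomeomorph (f b)) :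
    IsHomeomorph (asumMap A a X Y x y f) := by
  let e b := (hh b).homeomorph
  have hg : ∀ b, (e b).symm (y b) = x b := fun b => (e b).symm_apply_eq.2 (hf b).symm
  refine isHomeomorph_iff_exists_inverse.2 ⟨continuous_asumMap hf fun b => (hh b).continuous,
    asumMap A a Y X y x (fun b => (e b).symm), ?_, ?_,
    continuous_asumMap hg fun b => (e b).symm.continuous⟩
  · exact congrFun ((asumMap_comp hg).trans <|
      (congrArg _ (funext fun b => (e b).symm_comp_self)).trans asumMap_id)
  · exact congrFun ((asumMap_comp hf).trans <|
      (congrArg _ (funext fun b => (e b).self_comp_symm)).trans asumMap_id)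

end ASumPt

theorem stmt7_general (A : Type u) [TopologicalSpace A] (a : A)
    (X Y : {b : A // b ≠ a} → Type u) [(b : {b : A // b ≠ a}) → TopologicalSpace (X b)]
    [(b : {b : A // b ≠ a}) → TopologicalSpace (Y b)]
    (x : (b : {b : A // b ≠ a}) → X b) (y : (b : {b : A // b ≠ a}) → Y b)
    (f : (b : {b : A // b ≠ a}) → X b → Y b) (hf : ∀ b, f b (x b) = y b) :
    ((∀ b, Topology.IsEmbedding (f b)) → Topology.IsEmbedding (asumMap A a X Y x y f)) ∧
    ((∀ b, IsHomeomorph (f b)) → IsHomeomorph (asumMap A a X Y x y f)) :=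
  ⟨ASumPt.isEmbedding_asumMap hf, ASumPt.isHomeomorph_asumMap hf⟩

/-- if all `f_b` are topological embeddings then `Σ f_b` is a topological
embedding; if all `f_b` are homeomorphisms then `Σ f_b` is a homeomorphism. -/
theorem stmt7 (A : Type u) [TopologicalSpace A] (a : A) (hA : IsFilterSpace A a)
    (X Y : {b : A // b ≠ a} → Type u) [(b : {b : A // b ≠ a}) → TopologicalSpace (X b)]
    [(b : {b : A // b ≠ a}) → TopologicalSpace (Y b)]
    (x : (b : {b : A // b ≠ a}) → X b) (y : (b : {b : A // b ≠ a}) → Y b)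
    (f : (b : {b : A // b ≠ a}) → X b → Y b) (hf : ∀ b, f b (x b) = y b) :
    ((∀ b, Topology.IsEmbedding (f b)) → Topology.IsEmbedding (asumMap A a X Y x y f)) ∧
    ((∀ b, IsHomeomorph (f b)) → IsHomeomorph (asumMap A a X Y x y f)) :=
  stmt7_general A a X Y x y f hf
end

section
/- Let A be a filter space that is not finitely generated. Then there exists a filter space Y whose underlying set has the same cardinality as that of A and such that CH({Y}) = SCH({A}), i.e., the coreflective hull of Y equals the class of all subspaces of spaces belonging to the coreflective hull of A. -/
universe u v

/-!
Every member of `CH {A}` carries the final topology of a family of maps out of `A` in which only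
the neighbourhoods of the accumulation point `a` matter. Gluing a copy of `A` at every node of the
tree of finite words over `A \ {a}` gives a space `T` of `CH {A}`, and `Y` is `T` with every node
but the root made isolated; `|Y| = |A|` because `A` is infinite.

A subspace `X` of a space `M ∈ CH {A}` is a quotient of copies of `Y`: a point of `M` in the closure
of a set `S` is the image of the root under a continuous map `T → M` that sends nodes arbitrarily
close to the root into `S`, and composing these maps with retractions of `M` onto `X` gives the
quotient maps. Conversely, a quotient of copies of `Y` embeds into a space of `CH {A}` obtained by
hanging a copy of `T` at each root and attaching at every node a second copy of `A` that leads
back into `X`.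
-/

open Topology Set Filter TopologicalSpace

section Hull

def IsQuotientOfCopies (Z : Type u) (tZ : TopologicalSpace Z) (X : Type u)
    (tX : TopologicalSpace X) : Prop :=
  ∃ (I : Type u) (g : I → Z → X), (∀ x, ∃ i z, g i z = x) ∧ tX = ⨆ i, coinduced (g i) tZ

variable {Z X : Type u} {tZ : TopologicalSpace Z}

theorem isCoreflective_isQuotientOfCopies : IsCoreflective (IsQuotientOfCopies Z tZ) := by
  constructor
  · intro ι X t h
    choose I g hg ht using h
    refine ⟨(k : ι) × I k, fun p z => ⟨p.1, g p.1 p.2 z⟩, fun ⟨k, x⟩ => ?_, ?_⟩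
    · obtain ⟨i, z, rfl⟩ := hg k x
      exact ⟨⟨k, i⟩, z, rfl⟩
    · simp only [instTopologicalSpaceSigma, ht, coinduced_iSup, coinduced_compose, iSup_sigma]
      rfl
  · rintro X Y tX tY f ⟨⟨rfl⟩, hf⟩ ⟨I, g, hg, rfl⟩
    refine ⟨I, fun i => f ∘ g i, fun y => ?_, ?_⟩
    · obtain ⟨x, rfl⟩ := hf y
      obtain ⟨i, z, rfl⟩ := hg x
      exact ⟨i, z, rfl⟩
    · simp only [coinduced_iSup, coinduced_compose]

theorem ch_singleClass_iff {tX : TopologicalSpace X} :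
    CH (singleClass Z tZ) X tX ↔ IsQuotientOfCopies Z tZ X tX := by
  let _ := tX
  constructor
  · refine fun h => h _ isCoreflective_isQuotientOfCopies fun Y tY ⟨e⟩ => ?_
    exact ⟨PUnit, fun _ => e.symm, fun y => ⟨⟨⟩, e y, e.symm_apply_apply y⟩,
      by rw [iSup_const, e.symm.coinduced_eq]⟩
  · rintro ⟨I, g, hg, hX⟩ C hC hZ
    refine hC.2 _ _ _ _ (fun p : (_ : I) × Z => g p.1 p.2) ⟨⟨?_⟩, fun x => ?_⟩
      (hC.1 I _ _ fun _ => hZ Z tZ ⟨Homeomorph.refl Z⟩)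
    · simp only [hX, instTopologicalSpaceSigma, coinduced_iSup, coinduced_compose]
      rfl
    · obtain ⟨i, z, rfl⟩ := hg x
      exact ⟨⟨i, z⟩, rfl⟩

end Hull

section FinalTopAt

variable {A X J : Type u} [tA : TopologicalSpace A] {a : A}

/-- The final topology of the maps `q j`, each seen as a map out of `A` in which only the
neighbourhoods of `a` count. For a filter space `(A, a)` these are exactly the members of
`CH {A}`. -/
abbrev finalTopAt (a : A) (q : J → A → X) : TopologicalSpace X :=
  ⨆ j, coinduced (q j) (nhdsAdjoint a (𝓝 a))

theorem isOpen_finalTopAt_iff {q : J → A → X} {U : Set X} :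
    IsOpen[finalTopAt a q] U ↔ ∀ j, q j a ∈ U → q j ⁻¹' U ∈ 𝓝 a := by
  rw [finalTopAt, isOpen_iSup_iff]
  rfl

theorem IsFilterSpace.eq_nhdsAdjoint (hA : IsFilterSpace A a) : tA = nhdsAdjoint a (𝓝 a) := by
  refine TopologicalSpace.ext_iff.2 fun U => ⟨fun hU ha => hU.mem_nhds ha, fun hU => ?_⟩
  refine isOpen_iff_mem_nhds.2 fun x hx => ?_
  obtain rfl | hxa := eq_or_ne x a
  · exact hU hx
  · exact mem_of_superset ((hA.2 x hxa).mem_nhds rfl) (singleton_subset_iff.2 hx)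

theorem ch_finalTopAt (hA : IsFilterSpace A a) (q : J → A → X) :
    CH (singleClass A tA) X (finalTopAt a q) := by
  rw [ch_singleClass_iff]
  refine ⟨J ⊕ X, Sum.elim q fun x _ => x, fun x => ⟨.inr x, a, rfl⟩, ?_⟩
  have hconst (x : X) : coinduced (fun _ : A => x) tA = ⊥ :=
    le_bot_iff.1 (continuous_iff_coinduced_le.1 (@continuous_const _ _ _ ⊥ x))
  simp only [iSup_sum, Sum.elim_inl, Sum.elim_inr, hconst, iSup_bot, sup_bot_eq, finalTopAt,
    ← hA.eq_nhdsAdjoint]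

theorem exists_eq_finalTopAt_of_ch (hA : IsFilterSpace A a) {tX : TopologicalSpace X}
    (h : CH (singleClass A tA) X tX) : ∃ (J : Type u) (q : J → A → X), tX = finalTopAt a q := by
  obtain ⟨J, q, -, hX⟩ := ch_singleClass_iff.1 h
  exact ⟨J, q, by rw [hX, finalTopAt, ← hA.eq_nhdsAdjoint]⟩

end FinalTopAt

/-- The points of `A` other than `a`: a structure rather than a subtype, so that
`List (Punctured a)` inherits no topology from `A`. -/
structure Punctured {A : Type u} (a : A) : Type u where
  val : A
  ne : val ≠ a

def Punctured.equivCompl {A : Type u} (a : A) : Punctured a ≃ ({a}ᶜ : Set A) where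
  toFun m := ⟨m.val, m.ne⟩
  invFun z := ⟨z.1, z.2⟩

abbrev FilterTree {A : Type u} (a : A) : Type u := List (Punctured a)

namespace FilterTree

variable {A : Type u} {a : A}

open scoped Classical in
noncomputable def child (s : FilterTree a) (z : A) : FilterTree a :=
  if h : z = a then s else s ++ [⟨z, h⟩]

theorem child_self (s : FilterTree a) : child s a = s := dif_pos rfl

theorem child_of_ne (s : FilterTree a) {z : A} (h : z ≠ a) : child s z = s ++ [⟨z, h⟩] :=
  dif_neg h

theorem child_cons (m : Punctured a) (s : FilterTree a) (z : A) :
    child (m :: s) z = m :: child s z := by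
  obtain rfl | h := eq_or_ne z a
  · simp only [child_self]
  · simp only [child_of_ne _ h, List.cons_append]

variable [TopologicalSpace A]

/-- One copy of `A` per node `s`, sending `a` to `s` and the isolated points to the children
of `s`. -/
noncomputable instance : TopologicalSpace (FilterTree a) := finalTopAt a child

theorem isOpen_iff {W : Set (FilterTree a)} : IsOpen W ↔ ∀ s ∈ W, child s ⁻¹' W ∈ 𝓝 a := by
  refine isOpen_finalTopAt_iff.trans (forall_congr' fun s => ?_)
  rw [child_self]

theorem isOpen_cons_preimage {W : Set (FilterTree a)} (hW : IsOpen W) (m : Punctured a) :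
    IsOpen (List.cons m ⁻¹' W) := by
  rw [isOpen_iff] at hW ⊢
  intro s hs
  simpa only [preimage_preimage, ← child_cons] using hW _ hs

/-- The prime factor of the tree at its root: the root keeps its neighbourhoods and every other
node becomes isolated. This is the filter space `Y` of the theorem. -/
noncomputable abbrev primeTop (a : A) : TopologicalSpace (FilterTree a) := nhdsAdjoint [] (𝓝 [])

theorem isFilterSpace_primeTop (ha : ¬ IsOpen ({a} : Set A)) :
    @IsFilterSpace (FilterTree a) (primeTop a) [] := by
  refine ⟨fun h => ha ?_, fun s hs => isOpen_singleton_nhdsAdjoint _ hs⟩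
  obtain ⟨W, hWnil, hW, hnil⟩ := mem_nhds_iff.1 (h rfl)
  have hchild : child [] ⁻¹' W ⊆ {a} := fun z hz => by
    by_contra hza
    simpa [child_of_ne _ hza] using hWnil hz
  refine isOpen_iff_mem_nhds.2 fun z hz => ?_
  rw [mem_singleton_iff.1 hz]
  exact mem_of_superset (isOpen_iff.1 hW [] hnil) hchild

theorem mk_eq_of_not_alexandrovDiscrete (hA : ¬ AlexandrovDiscrete A) :
    Cardinal.mk (FilterTree a) = Cardinal.mk A := by
  have : Infinite A := by
    by_contra hfin
    have := not_infinite_iff_finite.1 hfin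
    exact hA inferInstance
  have hmk : Cardinal.mk (Punctured a) = Cardinal.mk A := by
    have hsingleton : Cardinal.mk ({a} : Set A) < Cardinal.mk A :=
      (Cardinal.mk_singleton a).trans_lt (Cardinal.one_lt_aleph0.trans_le (Cardinal.aleph0_le_mk A))
    rw [Cardinal.mk_congr (Punctured.equivCompl a), Cardinal.mk_compl_of_infinite {a} hsingleton]
  have : Infinite (Punctured a) := Cardinal.infinite_iff.2 (hmk ▸ Cardinal.aleph0_le_mk A)
  rw [Cardinal.mk_list_eq_mk, hmk]

section Graft

variable {X J : Type u}

def graft (y : X) (ψ : Punctured a → FilterTree a → X) : FilterTree a → X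
  | [] => y
  | m :: s => ψ m s

theorem continuous_graft [tX : TopologicalSpace X] {q : J → A → X} (hX : tX = finalTopAt a q)
    (j : J) {ψ : Punctured a → FilterTree a → X} (hψ : ∀ m, Continuous (ψ m))
    (hψnil : ∀ m, ψ m [] = q j m.val) :
    Continuous (graft (q j a) ψ) := by
  refine continuous_def.2 fun U hU => isOpen_iff.2 ?_
  rintro (_ | ⟨m, s⟩) hs
  · filter_upwards [isOpen_finalTopAt_iff.1 (hX ▸ hU) j hs] with z hz
    obtain rfl | hza := eq_or_ne z a
    · rwa [mem_preimage, child_self]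
    · rw [mem_preimage, child_of_ne _ hza, List.nil_append]
      show ψ _ [] ∈ U
      rwa [hψnil]
  · have hpre : child (m :: s) ⁻¹' (graft (q j a) ψ ⁻¹' U) = child s ⁻¹' (ψ m ⁻¹' U) := by
      ext z
      rw [mem_preimage, child_cons]
      rfl
    rw [hpre]
    exact isOpen_iff.1 ((hψ m).isOpen_preimage U hU) s hs

theorem nil_mem_closure_graft (y : X) {ψ : Punctured a → FilterTree a → X} {S : Set X}
    (hψ : ∃ᶠ z in 𝓝 a, ∃ h : z ≠ a, [] ∈ closure (ψ ⟨z, h⟩ ⁻¹' S)) :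
    [] ∈ closure (graft y ψ ⁻¹' S) := by
  refine mem_closure_iff.2 fun W hW hnil => ?_
  obtain ⟨z, ⟨hza, hz⟩, hzW⟩ := (hψ.and_eventually (isOpen_iff.1 hW [] hnil)).exists
  rw [child_of_ne _ hza, List.nil_append] at hzW
  obtain ⟨t, htW, htS⟩ := mem_closure_iff.1 hz _ (isOpen_cons_preimage hW _) hzW
  exact ⟨_, htW, htS⟩

/-- The points reached in this way form a closed set containing `S`: if `q j z` is reached for
`z` arbitrarily close to `a`, grafting the witnesses below the root reaches `q j a`. -/
theorem exists_continuous_nil_mem_closure_preimage [tX : TopologicalSpace X] {q : J → A → X}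
    (hX : tX = finalTopAt a q) {S : Set X} {y : X} (hy : y ∈ closure S) :
    ∃ φ : FilterTree a → X, Continuous φ ∧ φ [] = y ∧ [] ∈ closure (φ ⁻¹' S) := by
  set G := {y | ∃ φ : FilterTree a → X, Continuous φ ∧ φ [] = y ∧ [] ∈ closure (φ ⁻¹' S)}
  have hSG : S ⊆ G := fun y hy =>
    ⟨fun _ => y, continuous_const, rfl, by simp only [preimage_const_of_mem hy, closure_univ,
      mem_univ]⟩
  have hG : IsClosed G := by
    rw [← isOpen_compl_iff, hX, isOpen_finalTopAt_iff]
    intro j hj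
    by_contra hnot
    have hfreq : ∃ᶠ z in 𝓝 a, q j z ∈ G := (not_eventually.1 hnot).mono fun _ => not_not.1
    have hψ (m : Punctured a) : ∃ ψ : FilterTree a → X, Continuous ψ ∧ ψ [] = q j m.val ∧
        (q j m.val ∈ G → [] ∈ closure (ψ ⁻¹' S)) := by
      by_cases hm : q j m.val ∈ G
      · obtain ⟨ψ, hψc, hψnil, hψS⟩ := hm
        exact ⟨ψ, hψc, hψnil, fun _ => hψS⟩
      · exact ⟨fun _ => q j m.val, continuous_const, rfl, fun h => (hm h).elim⟩
    choose ψ hψc hψnil hψS using hψ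
    refine hj ⟨graft (q j a) ψ, continuous_graft hX j hψc hψnil, rfl, nil_mem_closure_graft _ ?_⟩
    exact hfreq.mono fun z hz => ⟨fun hza => hj (hza ▸ hz), hψS _ hz⟩
  exact closure_minimal hSG hG hy

end Graft

end FilterTree

section Subspace

variable {A X M J : Type u} [tA : TopologicalSpace A] {a : A}

theorem ch_primeTop_of_isEmbedding [tX : TopologicalSpace X] [tM : TopologicalSpace M]
    {q : J → A → M} (hM : tM = finalTopAt a q) {e : X → M} (he : IsEmbedding e) :
    CH (singleClass (FilterTree a) (FilterTree.primeTop a)) X tX := by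
  -- `r x₀` retracts `M` onto `X`, sending the points outside `range e` to `x₀`.
  set r : X → M → X := fun x₀ => Function.extend e id fun _ => x₀
  have hre (x₀ x : X) : r x₀ (e x) = x := he.injective.extend_apply _ _ _
  have hr (x₀ : X) (y : M) : r x₀ y = x₀ ∨ e (r x₀ y) = y := by
    by_cases hy : ∃ x, e x = y
    · obtain ⟨x, rfl⟩ := hy
      exact .inr (congrArg e (hre x₀ x))
    · exact .inl (Function.extend_apply' _ _ _ hy)
  rw [ch_singleClass_iff]
  refine ⟨{p : X × (FilterTree a → M) // Continuous p.2 ∧ p.2 [] = e p.1},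
    fun p s => r p.1.1 (p.1.2 s),
    fun x => ⟨⟨(x, fun _ => e x), continuous_const, rfl⟩, [], hre x x⟩,
    TopologicalSpace.ext_iff.2 fun U => ?_⟩
  simp only [isOpen_iSup_iff, isOpen_coinduced]
  constructor
  · rintro hU ⟨⟨x₀, φ⟩, hφ, hφnil⟩ hnil
    dsimp only at hφ hφnil hnil ⊢
    obtain ⟨V, hV, rfl⟩ := he.isInducing.isOpen_iff.1 hU
    have hx₀ : e x₀ ∈ V := by simpa [hφnil, hre] using hnil
    filter_upwards [hφ.continuousAt.preimage_mem_nhds (hV.mem_nhds (hφnil ▸ hx₀))] with s hs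
    show e (r x₀ (φ s)) ∈ V
    rcases hr x₀ (φ s) with h | h <;> rw [h] <;> assumption
  · intro h
    rw [← isClosed_compl_iff, ← closure_subset_iff_isClosed]
    intro x hx hxU
    obtain ⟨φ, hφ, hφnil, hcl⟩ := FilterTree.exists_continuous_nil_mem_closure_preimage hM
      (mem_closure_image he.continuous.continuousAt hx)
    have hnhds := h ⟨(x, φ), hφ, hφnil⟩ (by simpa [hφnil, hre] using hxU)
    obtain ⟨s, hsU, x', hx'U, hx'⟩ := mem_closure_iff_nhds.1 hcl _ hnhds
    exact hx'U (by simpa [← hx', hre] using hsU)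

theorem ch_primeTop_of_sch (hA : IsFilterSpace A a) {tX : TopologicalSpace X}
    (h : SCH (singleClass A tA) X tX) :
    CH (singleClass (FilterTree a) (FilterTree.primeTop a)) X tX := by
  obtain ⟨M, tM, e, hM, he⟩ := h
  obtain ⟨J, q, hq⟩ := exists_eq_finalTopAt_of_ch hA hM
  exact ch_primeTop_of_isEmbedding hq he

end Subspace

section Ambient

variable {A X I : Type u} {a : A}

open FilterTree

def ambientNode (p : I → FilterTree a → X) (i : I) : FilterTree a → X ⊕ (I × FilterTree a)
  | [] => .inl (p i [])
  | s@(_ :: _) => .inr (i, s)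

open scoped Classical in
/-- The space `X ⊕ (I × FilterTree a)` in which `X` embeds: the `i`-th tree is glued to `X` at
its root `p i []`, and each node carries two copies of `A` anchored at it, one spanning the tree
and one sending `z ≠ a` to the point `p i (child s z)` of `X`. -/
noncomputable def ambientFamily (p : I → FilterTree a → X) :
    I × FilterTree a × Bool → A → X ⊕ (I × FilterTree a)
  | (i, s, true) => ambientNode p i ∘ child s
  | (i, s, false) => fun z => if z = a then ambientNode p i s else .inl (p i (child s z))

theorem ambientFamily_apply_self (p : I → FilterTree a → X) (i : I) (s : FilterTree a) (b : Bool) :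
    ambientFamily p (i, s, b) a = ambientNode p i s := by
  cases b
  · exact if_pos rfl
  · exact congrArg (ambientNode p i) (child_self s)

variable [tA : TopologicalSpace A] [tX : TopologicalSpace X] {p : I → FilterTree a → X}

theorem isOpen_preimage_inl (hX : tX = ⨆ i, coinduced (p i) (primeTop a))
    {Uc : Set (X ⊕ (I × FilterTree a))} (hUc : IsOpen[finalTopAt a (ambientFamily p)] Uc) :
    IsOpen (Sum.inl ⁻¹' Uc) := by
  rw [hX, isOpen_iSup_iff]
  intro i hnil
  set W := ambientNode p i ⁻¹' Uc ∩ (Sum.inl ∘ p i) ⁻¹' Uc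
  have hW : IsOpen W := by
    refine isOpen_iff.2 fun s hs => ?_
    have hanchor (b : Bool) := isOpen_finalTopAt_iff.1 hUc (i, s, b)
      (by rw [ambientFamily_apply_self]; exact hs.1)
    filter_upwards [hanchor true, hanchor false] with z hz₁ hz₂
    obtain rfl | hza := eq_or_ne z a
    · rwa [mem_preimage, child_self]
    · exact ⟨hz₁, by simpa [ambientFamily, hza] using hz₂⟩
  exact mem_of_superset (hW.mem_nhds ⟨hnil, hnil⟩) fun s hs => hs.2

theorem exists_isOpen_preimage_inl_eq (hX : tX = ⨆ i, coinduced (p i) (primeTop a))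
    {U : Set X} (hU : IsOpen U) :
    ∃ Uc, IsOpen[finalTopAt a (ambientFamily p)] Uc ∧ Sum.inl ⁻¹' Uc = U := by
  set Uc : Set (X ⊕ (I × FilterTree a)) :=
    {m | m.elim (· ∈ U) fun is => is.2 ∈ interior (p is.1 ⁻¹' U)}
  have hnode (i : I) (s : FilterTree a) : ambientNode p i s ∈ Uc ↔ s ∈ interior (p i ⁻¹' U) := by
    rcases s with _ | ⟨m, s⟩
    · have hUi : IsOpen[primeTop a] (p i ⁻¹' U) :=
        isOpen_coinduced.1 (isOpen_iSup_iff.1 (hX ▸ hU) i)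
      exact ⟨fun h => mem_interior_iff_mem_nhds.2 (hUi h),
        fun h => interior_subset (s := p i ⁻¹' U) h⟩
    · exact Iff.rfl
  refine ⟨Uc, isOpen_finalTopAt_iff.2 ?_, rfl⟩
  rintro ⟨i, s, b⟩ hs
  rw [ambientFamily_apply_self, hnode] at hs
  filter_upwards [isOpen_iff.1 isOpen_interior s hs] with z hz
  cases b
  · obtain rfl | hza := eq_or_ne z a
    · rw [mem_preimage, ambientFamily_apply_self, hnode, ← child_self s]
      exact hz
    · simp only [mem_preimage, ambientFamily, if_neg hza]
      exact interior_subset (s := p i ⁻¹' U) hz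
  · exact (hnode i _).2 hz

theorem isEmbedding_inl_ambient (hX : tX = ⨆ i, coinduced (p i) (primeTop a)) :
    @IsEmbedding X _ tX (finalTopAt a (ambientFamily p)) Sum.inl := by
  let _ : TopologicalSpace (X ⊕ (I × FilterTree a)) := finalTopAt a (ambientFamily p)
  refine ⟨⟨TopologicalSpace.ext_iff.2 fun U => ?_⟩, Sum.inl_injective⟩
  rw [isOpen_induced_iff]
  exact ⟨exists_isOpen_preimage_inl_eq hX, fun ⟨Uc, hUc, hU⟩ => hU ▸ isOpen_preimage_inl hX hUc⟩

theorem sch_of_ch_primeTop (hA : IsFilterSpace A a)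
    (h : CH (singleClass (FilterTree a) (primeTop a)) X tX) : SCH (singleClass A tA) X tX := by
  obtain ⟨I, p, -, hX⟩ := ch_singleClass_iff.1 h
  exact ⟨_, _, _, ch_finalTopAt hA (ambientFamily p), isEmbedding_inl_ambient hX⟩

end Ambient

/-- for a filter space `A` (with accumulation point `a`) which is not finitely
generated, there is a filter space `Y` of the same cardinality as `A` with
`CH {Y} = SCH {A}`. -/
theorem stmt8 (A : Type u) [tA : TopologicalSpace A] (a : A) (hA : IsFilterSpace A a)
    (hfg : ¬ AlexandrovDiscrete A) :
    ∃ (Y : Type u) (tY : TopologicalSpace Y) (b : Y), @IsFilterSpace Y tY b ∧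
      Cardinal.mk Y = Cardinal.mk A ∧
      ∀ (X : Type u) (tX : TopologicalSpace X),
        CH (singleClass Y tY) X tX ↔ SCH (singleClass A tA) X tX :=
  ⟨FilterTree a, FilterTree.primeTop a, [], FilterTree.isFilterSpace_primeTop hA.1,
    FilterTree.mk_eq_of_not_alexandrovDiscrete hfg,
    fun _ _ => ⟨sch_of_ch_primeTop hA, ch_primeTop_of_sch hA⟩⟩
end

section
/- Let X be an arbitrary topological space that is not finitely generated. Then there exists a filter space Y whose underlying set has the same cardinality as that of X and such that CH({Y}) = SCH({X}), i.e., the coreflective hull of Y equals the class of all subspaces of spaces belonging to the coreflective hull of X. -/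
universe u v

/-!
For nonempty `B`, `CH {B}` is the class of `B`-generated spaces. A quotient of a subspace is a
subspace of a quotient, so every `Y`-generated space lies in `SCH {A}` as soon as `Y` does; this
gives `CH {Y} ⊆ SCH {A}` for every `Y ∈ SCH {A}`.

As `A` is not finitely generated, it has a non-isolated point and an open set `O` whose complement
is not open. The points of `Y` are the finite sequences of pairs `(m, c)` of points of `A`; all of
them but the root `[]` are isolated, and a neighbourhood of the root must contain every branch
along which each `c` stays in a prescribed neighbourhood of its `m`. `Y` is a subspace of a space
glued from copies of `A`: one copy joins a node to its children, another joins it along `O` to an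
isolated leaf, and since `Oᶜ` is not open, an open set containing a node contains its leaf.

Conversely, let `X ⊆ Z` with `Z` `A`-generated and `U ⊆ X` not open, so that some point of `U` lies
in the closure of `S = X \ U`. In `Z` this closure is reached from `S` by transfinitely adding
limits along continuous maps `A → Z`. Reading a sequence in `Y` as instructions for descending
along these well-founded witnesses gives a continuous map `Y → X` that pulls `U` back to a set
containing the root but none of its neighbourhoods.
-/

open Topology

section General

open Set Filter

variable {X Y Z : Type*} [TopologicalSpace X] [TopologicalSpace Y] [TopologicalSpace Z]

theorem Topology.isGeneratedBy_of_forall_isOpen {ι : Type*} {B : ι → Type*}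
    [∀ i, TopologicalSpace (B i)]
    (h : ∀ U : Set X, (∀ i (f : C(B i, X)), IsOpen (f ⁻¹' U)) → IsOpen U) : IsGeneratedBy B X :=
  ⟨continuous_def.2 fun U hU => h U (WithGeneratedByTopology.isOpen_iff.1 hU)⟩

theorem Topology.IsInducing.exists_mem_closure_image_compl {e : X → Z} (he : IsInducing e)
    {U : Set X} (hU : ¬ IsOpen U) : ∃ x ∈ U, e x ∈ closure (e '' Uᶜ) := by
  have : ¬ closure Uᶜ ⊆ Uᶜ := fun h => hU (isClosed_compl_iff.1 (isClosed_of_closure_subset h))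
  obtain ⟨x, hx, hxU⟩ := not_subset.1 this
  exact ⟨x, not_not.1 hxU, by rwa [he.closure_eq_preimage_closure_image] at hx⟩

theorem continuousAt_of_forall_eq_or_apply_eq {e : X → Z} (he : IsInducing e) {ρ : Y → Z}
    {g : Y → X} {b : Y} (hρ : ContinuousAt ρ b) (hb : e (g b) = ρ b)
    (hg : ∀ y, g y = g b ∨ e (g y) = ρ y) : ContinuousAt g b := by
  rw [ContinuousAt, he.tendsto_nhds_iff, hb]
  intro V hV
  refine mem_map.2 ?_
  filter_upwards [mem_map.1 (hρ hV)] with y hy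
  rcases hg y with h | h
  · simpa [h, hb] using mem_of_mem_nhds hV
  · simpa [h] using hy

theorem continuous_of_continuousAt_of_isOpen_singleton {b : Y} (hY : ∀ y, y ≠ b → IsOpen {y})
    {g : Y → X} (hg : ContinuousAt g b) : Continuous g :=
  continuous_iff_continuousAt.2 fun y => by
    rcases eq_or_ne y b with rfl | hy
    · exact hg
    · rw [ContinuousAt, (isOpen_singleton_iff_nhds_eq_pure y).1 (hY y hy)]
      exact tendsto_pure_nhds g y

theorem exists_continuous_lift_of_isOpen_singleton {b : Y} (hY : ∀ y, y ≠ b → IsOpen {y})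
    {ρ : Y → Z} (hρ : Continuous ρ) {e : X → Z} (he : IsInducing e) {x₀ : X} {T : Set X}
    (hb : ρ b = e x₀) (hbT : ρ b ∉ e '' T) :
    ∃ g : C(Y, X), g b = x₀ ∧ ∀ y, ρ y ∈ e '' T → g y ∈ T := by
  classical
  let g : Y → X := fun y => if h : ρ y ∈ e '' T then h.choose else x₀
  have hg₀ : g b = x₀ := dif_neg hbT
  have hg : ∀ y, g y = g b ∨ e (g y) = ρ y := fun y => by
    by_cases h : ρ y ∈ e '' T
    · exact .inr (by simp only [g, dif_pos h]; exact h.choose_spec.2)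
    · exact .inl (by simp only [g, dif_neg h, hg₀])
  refine ⟨⟨g, continuous_of_continuousAt_of_isOpen_singleton hY
    (continuousAt_of_forall_eq_or_apply_eq he hρ.continuousAt (hg₀ ▸ hb.symm) hg)⟩, hg₀,
    fun y h => ?_⟩
  simp only [ContinuousMap.coe_mk, g, dif_pos h]
  exact h.choose_spec.1

end General

section Generated

variable {B : Type u} [tB : TopologicalSpace B]

instance Topology.IsGeneratedBy.self : IsGeneratedBy (fun _ : Unit => B) B :=
  IsGeneratedBy.inst ()

theorem isCoreflective_isGeneratedBy_s9 {ι : Type*} (X : ι → Type u) [∀ i, TopologicalSpace (X i)] :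
    IsCoreflective (fun Y tY => @IsGeneratedBy ι X _ Y tY) :=
  ⟨fun _ _ _ _ => Sigma.isGeneratedBy, fun _ _ _ _ _ hf _ => hf.isGeneratedBy⟩

theorem Topology.IsGeneratedBy.isQuotientMap_sigma {ι : Type*} {X : ι → Type*}
    [∀ i, TopologicalSpace (X i)] {Y : Type*} [TopologicalSpace Y] [IsGeneratedBy X Y]
    [Nonempty ι] [∀ i, Nonempty (X i)] :
    IsQuotientMap (fun x : (f : (i : ι) × C(X i, Y)) × X f.1 => x.1.2 x.2) := by
  refine (isQuotientMap_iff _).2 ⟨⟨?_⟩, fun y => ?_⟩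
  · rw [← TopologicalSpace.generatedBy_eq_coinduced, IsGeneratedBy.generatedBy_eq]
  · obtain ⟨i⟩ := ‹Nonempty ι›
    exact ⟨⟨⟨i, ContinuousMap.const _ y⟩, Classical.arbitrary _⟩, rfl⟩

theorem isCoreflective_CH (𝒜 : TopClass.{u}) : IsCoreflective (CH 𝒜) :=
  ⟨fun ι X t hX C hC h𝒜 => hC.1 ι X t fun i => hX i C hC h𝒜,
    fun X Y tX tY f hf hX C hC h𝒜 => hC.2 X Y tX tY f hf (hX C hC h𝒜)⟩

theorem CH_singleClass_iff [Nonempty B] {X : Type u} [TopologicalSpace X] :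
    CH (singleClass B tB) X ‹_› ↔ IsGeneratedBy (fun _ : Unit => B) X := by
  refine ⟨fun hX => hX _ (isCoreflective_isGeneratedBy_s9 _) ?_, fun hX C hC h𝒜 => ?_⟩
  · rintro Y tY ⟨h⟩
    exact h.symm.isQuotientMap.isGeneratedBy
  · exact hC.2 _ _ _ _ _ hX.isQuotientMap_sigma
      (hC.1 _ _ _ fun _ => h𝒜 B tB ⟨Homeomorph.refl B⟩)

end Generated

section Subspaces

open Set

theorem exists_isQuotientMap_isEmbedding {P Q X : Type u} [TopologicalSpace P]
    [TopologicalSpace Q] [TopologicalSpace X] {e : P → Q} (he : IsEmbedding e) {π : P → X}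
    (hπ : IsQuotientMap π) :
    ∃ (W : Type u) (tW : TopologicalSpace W) (r : Q → W) (i : X → W),
      @IsQuotientMap Q W _ tW r ∧ @IsEmbedding X W _ tW i := by
  classical
  -- `Q` with `range e` collapsed onto `X` along `π`
  let r : Q → X ⊕ ↥(range e)ᶜ := fun q =>
    if h : q ∈ range e then .inl (π h.choose) else .inr ⟨q, h⟩
  have hr : ∀ p, r (e p) = .inl (π p) := fun p => by
    have h : e p ∈ range e := ⟨p, rfl⟩
    simp only [r, dif_pos h, he.injective h.choose_spec]
  let tW : TopologicalSpace (X ⊕ ↥(range e)ᶜ) := .coinduced r ‹_›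
  refine ⟨_, tW, r, .inl, ⟨⟨rfl⟩, ?_⟩, ⟨⟨?_⟩, Sum.inl_injective⟩⟩
  · rintro (x | ⟨q, hq⟩)
    · obtain ⟨p, rfl⟩ := hπ.surjective x
      exact ⟨e p, hr p⟩
    · exact ⟨q, dif_neg hq⟩
  · ext V
    rw [isOpen_induced_iff]
    constructor
    · intro hV
      obtain ⟨O, hO, hOV⟩ := he.isOpen_iff.1 (hπ.continuous.isOpen_preimage V hV)
      refine ⟨{w | Sum.elim (· ∈ V) (·.1 ∈ O) w}, ?_, rfl⟩
      suffices r ⁻¹' {w | Sum.elim (· ∈ V) (·.1 ∈ O) w} = O by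
        rwa [← this] at hO
      ext q
      by_cases hq : q ∈ range e
      · obtain ⟨p, rfl⟩ := hq
        show Sum.elim _ _ (r (e p)) ↔ _
        rw [hr]
        exact (Set.ext_iff.1 hOV p).symm
      · show Sum.elim _ _ (r q) ↔ _
        rw [show r q = .inr ⟨q, hq⟩ from dif_neg hq]
        rfl
    · rintro ⟨W', hW', rfl⟩
      rw [← hπ.isOpen_preimage]
      have : π ⁻¹' (Sum.inl ⁻¹' W') = e ⁻¹' (r ⁻¹' W') := by
        ext p; simp [hr]
      exact this ▸ he.continuous.isOpen_preimage _ hW'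

theorem SCH_of_isGeneratedBy {𝒜 : TopClass.{u}} {Y X : Type u} [tY : TopologicalSpace Y]
    [tX : TopologicalSpace X] [Nonempty Y] [IsGeneratedBy (fun _ : Unit => Y) X]
    (hY : SCH 𝒜 Y tY) : SCH 𝒜 X tX := by
  obtain ⟨Q, tQ, e, hQ, he⟩ := hY
  obtain ⟨W, tW, r, i, hr, hi⟩ := exists_isQuotientMap_isEmbedding
    ((isEmbedding_sigmaMap (σ := fun _ => Y) (τ := fun _ => Q)
      (f₁ := @id ((_ : Unit) × C(Y, X))) (f₂ := fun _ => e) Function.injective_id).2 fun _ => he)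
    (IsGeneratedBy.isQuotientMap_sigma (X := fun _ : Unit => Y) (Y := X))
  exact ⟨W, tW, i, (isCoreflective_CH 𝒜).2 _ _ _ _ r hr
    ((isCoreflective_CH 𝒜).1 _ _ _ fun _ => hQ), hi⟩

end Subspaces

section Fan

variable {A : Type u}

/-- Branches are stored newest step first: `(m, c) :: s` extends `s` by a step from `m` to `c`. -/
def IsBranch (F : List (A × A) → A → Set A) : List (A × A) → Prop
  | [] => True
  | (m, c) :: s => IsBranch F s ∧ c ∈ F s m ∧ c ≠ m

structure TreeSpace (A : Type u) (O : Set A) where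
  path : List (A × A)
  isLeaf : Bool

structure FanSpace (A : Type u) (O : Set A) where
  path : List (A × A)

theorem Cardinal.mk_fanSpace [Infinite A] (O : Set A) :
    Cardinal.mk (FanSpace A O) = Cardinal.mk A := by
  rw [Cardinal.mk_congr ⟨FanSpace.path, FanSpace.mk, fun _ => rfl, fun _ => rfl⟩,
    Cardinal.mk_list_eq_mk, Cardinal.mk_prod, Cardinal.lift_id,
    Cardinal.mul_eq_self (Cardinal.aleph0_le_mk A)]

variable [TopologicalSpace A]

def IsNbhdFamily (F : List (A × A) → A → Set A) : Prop :=
  ∀ p m, IsOpen (F p m) ∧ m ∈ F p m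

namespace TreeSpace

variable (O : Set A)

open Classical in
noncomputable def branchMap (p : List (A × A)) (m c : A) : TreeSpace A O :=
  if c = m then ⟨p, false⟩ else ⟨(m, c) :: p, false⟩

open Classical in
noncomputable def leafMap (q : List (A × A)) (y : A) : TreeSpace A O := ⟨q, y ∈ O⟩

noncomputable instance topologicalSpace : TopologicalSpace (TreeSpace A O) :=
  (⨆ (p : List (A × A)) (m : A), .coinduced (branchMap O p m) ‹_›) ⊔
    ⨆ q, .coinduced (leafMap O q) ‹_›

variable {O}

theorem isOpen_iff {W : Set (TreeSpace A O)} :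
    IsOpen W ↔ (∀ p m, IsOpen (branchMap O p m ⁻¹' W)) ∧ ∀ q, IsOpen (leafMap O q ⁻¹' W) := by
  rw [topologicalSpace]
  exact isOpen_sup.trans (and_congr (by simp only [isOpen_iSup_iff, isOpen_coinduced])
    (by simp only [isOpen_iSup_iff, isOpen_coinduced]))

variable (O) in
instance : IsGeneratedBy (fun _ : Unit => A) (TreeSpace A O) :=
  .sup (.iSup fun _ => .iSup fun _ => .coinduced _) (.iSup fun _ => .coinduced _)

theorem mk_true_mem_of_mk_false_mem (hOc : ¬ IsOpen Oᶜ) {W : Set (TreeSpace A O)} (hW : IsOpen W)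
    {q : List (A × A)} (hq : ⟨q, false⟩ ∈ W) : ⟨q, true⟩ ∈ W := by
  by_contra h
  refine hOc ?_
  convert (isOpen_iff.1 hW).2 q
  ext y
  by_cases hy : y ∈ O <;> simp [leafMap, hy, hq, h]

theorem isOpen_setOf_isBranch {F : List (A × A) → A → Set A} (hF : IsNbhdFamily F) :
    IsOpen {z : TreeSpace A O | IsBranch F z.path} := by
  refine isOpen_iff.2 ⟨fun p m => ?_, fun q => ?_⟩
  · convert (isOpen_const (p := IsBranch F p)).inter (hF p m).1
    ext c
    by_cases hc : c = m
    · simp [branchMap, hc, (hF p m).2]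
    · simp [branchMap, hc, IsBranch]
  · convert isOpen_const (p := IsBranch F q)
    ext y
    simp [leafMap]

theorem isOpen_setOf_isLeaf (hO : IsOpen O) (T : Set (List (A × A))) :
    IsOpen {z : TreeSpace A O | z.isLeaf ∧ z.path ∈ T} := by
  refine isOpen_iff.2 ⟨fun p m => ?_, fun q => ?_⟩
  · convert isOpen_empty
    ext c
    by_cases hc : c = m <;> simp [branchMap, hc]
  · convert hO.inter (isOpen_const (p := q ∈ T))
    ext y
    simp [leafMap]

end TreeSpace

namespace FanSpace

variable {O : Set A}

open Classical in
noncomputable def toTreeSpace (s : FanSpace A O) : TreeSpace A O := ⟨s.path, s.path ≠ []⟩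

noncomputable instance : TopologicalSpace (FanSpace A O) := .induced toTreeSpace inferInstance

variable (O) in
def root : FanSpace A O := ⟨[]⟩

instance : Nonempty (FanSpace A O) := ⟨root O⟩

theorem isEmbedding_toTreeSpace : IsEmbedding (toTreeSpace (O := O)) :=
  ⟨⟨rfl⟩, fun s t h => by cases s; cases t; cases h; rfl⟩

theorem isOpen_of_forall (hO : IsOpen O) {W : Set (FanSpace A O)}
    (h : root O ∈ W → ∃ F, IsNbhdFamily F ∧ ∀ s : FanSpace A O, IsBranch F s.path → s ∈ W) :
    IsOpen W := by
  have hleaf := TreeSpace.isOpen_setOf_isLeaf hO (mk ⁻¹' W)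
  refine isOpen_induced_iff.2 ?_
  by_cases hroot : root O ∈ W
  · obtain ⟨F, hF, hFW⟩ := h hroot
    refine ⟨_, (TreeSpace.isOpen_setOf_isBranch hF).union hleaf, ?_⟩
    ext ⟨s⟩
    rcases s with _ | ⟨l, s⟩
    · simpa [toTreeSpace, IsBranch, root] using hroot
    · simpa [toTreeSpace] using hFW ⟨l :: s⟩
  · refine ⟨_, hleaf, ?_⟩
    ext ⟨s⟩
    rcases s with _ | ⟨l, s⟩
    · simpa [toTreeSpace, root] using hroot
    · simp [toTreeSpace]

theorem exists_isNbhdFamily_of_isOpen (hOc : ¬ IsOpen Oᶜ) {W : Set (FanSpace A O)}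
    (hW : IsOpen W) (hroot : root O ∈ W) :
    ∃ F, IsNbhdFamily F ∧ ∀ s : FanSpace A O, IsBranch F s.path → s ∈ W := by
  classical
  obtain ⟨W', hW', rfl⟩ := isOpen_induced_iff.1 hW
  let F : List (A × A) → A → Set A := fun p m =>
    if (⟨p, false⟩ : TreeSpace A O) ∈ W' then TreeSpace.branchMap O p m ⁻¹' W' else Set.univ
  have hF : IsNbhdFamily F := fun p m => by
    by_cases hp : (⟨p, false⟩ : TreeSpace A O) ∈ W'
    · simp only [F, if_pos hp]
      exact ⟨(TreeSpace.isOpen_iff.1 hW').1 p m, by simpa [TreeSpace.branchMap] using hp⟩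
    · simp [F, hp]
  have hnode : ∀ s, IsBranch F s → (⟨s, false⟩ : TreeSpace A O) ∈ W' := by
    intro s hs
    induction s with
    | nil => simpa [toTreeSpace, root] using hroot
    | cons l s ih =>
      obtain ⟨hs, hc, hcm⟩ := hs
      have hc : TreeSpace.branchMap O s l.1 l.2 ∈ W' := by simpa [F, ih hs] using hc
      simpa [TreeSpace.branchMap, hcm] using hc
  refine ⟨F, hF, fun ⟨s⟩ hs => ?_⟩
  rcases s with _ | ⟨l, s⟩
  · exact hroot
  · simpa [toTreeSpace] using TreeSpace.mk_true_mem_of_mk_false_mem hOc hW' (hnode _ hs)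

theorem isOpen_singleton (hO : IsOpen O) {s : FanSpace A O} (hs : s ≠ root O) : IsOpen {s} :=
  isOpen_of_forall hO fun h => (hs h.symm).elim

theorem not_isOpen_singleton_root (hOc : ¬ IsOpen Oᶜ) {m : A} (hm : ¬ IsOpen {m}) :
    ¬ IsOpen {root O} := by
  intro h
  obtain ⟨F, hF, hFW⟩ := exists_isNbhdFamily_of_isOpen hOc h rfl
  obtain ⟨c, hc, hcm⟩ : ∃ c ∈ F [] m, c ≠ m := by
    by_contra! h'
    exact hm (Set.eq_singleton_iff_unique_mem.2 ⟨(hF [] m).2, h'⟩ ▸ (hF [] m).1)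
  simpa [root] using hFW ⟨[(m, c)]⟩ ⟨trivial, hc, hcm⟩

theorem isFilterSpace (hO : IsOpen O) (hOc : ¬ IsOpen Oᶜ) {m : A} (hm : ¬ IsOpen {m}) :
    IsFilterSpace (FanSpace A O) (root O) :=
  ⟨not_isOpen_singleton_root hOc hm, fun _ => isOpen_singleton hO⟩

theorem mem_SCH [Nonempty A] : SCH (singleClass A ‹_›) (FanSpace A O) inferInstance :=
  ⟨TreeSpace A O, inferInstance, toTreeSpace, CH_singleClass_iff.2 inferInstance,
    isEmbedding_toTreeSpace⟩

end FanSpace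

end Fan

section ProbeClosure

open Set

variable (A : Type u) {Z : Type v} [TopologicalSpace A] [TopologicalSpace Z]

def probeClosure (T : Set Z) : Set Z :=
  {z | ∃ f : C(A, Z), ∃ a, f a = z ∧ a ∈ closure (f ⁻¹' T)}

def closureApprox (S : Set Z) (o : Ordinal.{u}) : Set Z :=
  S ∪ probeClosure A (⋃ β < o, closureApprox S β)
termination_by o

noncomputable def closureRank (S : Set Z) (z : Z) : Ordinal.{u} :=
  sInf {o | z ∈ closureApprox A S o}

structure ProbeDescent (S : Set Z) where
  support : Set Z
  closure_subset : closure S ⊆ support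
  rel : Z → Z → Prop
  wf : WellFounded rel
  probe : Z → C(A, Z)
  point : Z → A
  probe_point : ∀ z, probe z (point z) = z
  mem_closure : ∀ z ∈ support, z ∉ S →
    point z ∈ closure (probe z ⁻¹' {y | y ∈ support ∧ rel y z})

variable {A} {S : Set Z}

theorem closureRank_le {z : Z} {o : Ordinal.{u}} (h : z ∈ closureApprox A S o) :
    closureRank A S z ≤ o :=
  csInf_le' h

theorem mem_closureApprox_closureRank {z : Z} (h : z ∈ ⋃ o, closureApprox A S o) :
    z ∈ closureApprox A S (closureRank A S z) :=
  csInf_mem (mem_iUnion.1 h)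

theorem isClosed_iUnion_closureApprox [IsGeneratedBy (fun _ : Unit => A) Z] :
    IsClosed (⋃ o, closureApprox A S o) := by
  refine (IsGeneratedBy.isClosed_iff (fun _ : Unit => A)).2 fun _ f =>
    isClosed_of_closure_subset fun a ha => ?_
  let Θ := ⨆ a' : f ⁻¹' ⋃ o, closureApprox A S o, Order.succ (closureRank A S (f a'))
  have hΘ : f ⁻¹' ⋃ o, closureApprox A S o ⊆ f ⁻¹' ⋃ β < Θ, closureApprox A S β :=
    fun a' ha' => mem_iUnion₂.2 ⟨_, (Order.lt_succ _).trans_le (Ordinal.le_iSup _ ⟨a', ha'⟩),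
      mem_closureApprox_closureRank ha'⟩
  exact mem_iUnion.2 ⟨Θ, by rw [closureApprox]; exact Or.inr ⟨f, a, rfl, closure_mono hΘ ha⟩⟩

theorem nonempty_probeDescent [Nonempty A] [IsGeneratedBy (fun _ : Unit => A) Z] (S : Set Z) :
    Nonempty (ProbeDescent A S) := by
  classical
  let K := ⋃ o, closureApprox A S o
  have hprobe : ∀ z, ∃ p : C(A, Z) × A, p.1 p.2 = z ∧ (z ∈ K → z ∉ S →
      p.2 ∈ closure (p.1 ⁻¹' {y | y ∈ K ∧ closureRank A S y < closureRank A S z})) := by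
    intro z
    by_cases hz : z ∈ K ∧ z ∉ S
    · have h := mem_closureApprox_closureRank hz.1
      rw [closureApprox] at h
      obtain ⟨f, a, hfa, ha⟩ := h.resolve_left hz.2
      refine ⟨(f, a), hfa, fun _ _ => closure_mono (preimage_mono fun y hy => ?_) ha⟩
      obtain ⟨β, hβ, hy⟩ := mem_iUnion₂.1 hy
      exact ⟨mem_iUnion.2 ⟨β, hy⟩, (closureRank_le hy).trans_lt hβ⟩
    · exact ⟨(.const A z, Classical.arbitrary A), rfl, fun h₁ h₂ => (hz ⟨h₁, h₂⟩).elim⟩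
  choose p hp_apply hp_closure using hprobe
  refine ⟨⟨K, closure_minimal (fun z hz => ?_) isClosed_iUnion_closureApprox,
    _, (wellFounded_lt (α := Ordinal)).onFun, fun z => (p z).1, fun z => (p z).2, hp_apply,
    hp_closure⟩⟩
  exact mem_iUnion.2 ⟨0, by rw [closureApprox]; exact Or.inl hz⟩

end ProbeClosure

namespace ProbeDescent

open Set

variable {A : Type u} {Z : Type v} [TopologicalSpace A] [TopologicalSpace Z] {S : Set Z}
  (D : ProbeDescent A S)

open Classical in
noncomputable def step (z : Z) (l : A × A) : Z :=
  if l.1 = D.point z then D.probe z l.2 else z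

noncomputable def run (z₀ : Z) : List (A × A) → Z
  | [] => z₀
  | l :: s => D.step (run z₀ s) l

theorem exists_isNbhdFamily_run_mem {V : Set Z} (hV : IsOpen V) {z₀ : Z} (hz₀ : z₀ ∈ V) :
    ∃ F, IsNbhdFamily F ∧ ∀ s, IsBranch F s → D.run z₀ s ∈ V := by
  classical
  refine ⟨fun p m => if D.run z₀ p ∈ V then {c | D.step (D.run z₀ p) (m, c) ∈ V} else univ,
    fun p m => ?_, fun s hs => ?_⟩
  · dsimp only
    split_ifs with hp
    · by_cases hm : m = D.point (D.run z₀ p)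
      · simp only [step, hm, if_true]
        exact ⟨hV.preimage (D.probe _).continuous, by simpa [D.probe_point] using hp⟩
      · simp [step, hm, hp]
    · exact ⟨isOpen_univ, trivial⟩
  · induction s with
    | nil => exact hz₀
    | cons l s ih =>
      obtain ⟨hs, hc, -⟩ := hs
      simpa [run, ih hs] using hc

theorem exists_isBranch_run_mem {F : List (A × A) → A → Set A} (hF : IsNbhdFamily F) {z₀ : Z}
    (hz₀ : z₀ ∈ D.support) : ∃ s, IsBranch F s ∧ D.run z₀ s ∈ S := by
  suffices ∀ z ∈ D.support, ∀ s, IsBranch F s → D.run z₀ s = z →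
      ∃ s', IsBranch F s' ∧ D.run z₀ s' ∈ S from this z₀ hz₀ [] trivial rfl
  intro z
  induction z using D.wf.induction with
  | _ z ih =>
  intro hz s hs hsz
  by_cases hzS : z ∈ S
  · exact ⟨s, hs, hsz ▸ hzS⟩
  obtain ⟨c, hcF, hc, hcz⟩ :=
    mem_closure_iff.1 (D.mem_closure z hz hzS) _ (hF s _).1 (hF s _).2
  have hcm : c ≠ D.point z := by
    rintro rfl
    rw [D.probe_point] at hcz
    exact D.wf.irrefl.irrefl z hcz
  exact ih _ hcz hc ((D.point z, c) :: s) ⟨hs, hcF, hcm⟩ (by simp [run, step, hsz])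

end ProbeDescent

theorem FanSpace.continuous_run {A Z : Type u} [TopologicalSpace A] [TopologicalSpace Z]
    {S : Set Z} (D : ProbeDescent A S) {O : Set A} (hO : IsOpen O) (z₀ : Z) :
    Continuous fun s : FanSpace A O => D.run z₀ s.path :=
  continuous_def.2 fun _ hV => FanSpace.isOpen_of_forall hO fun h =>
    (D.exists_isNbhdFamily_run_mem hV h).imp fun _ hF => ⟨hF.1, fun s => hF.2 s.path⟩

theorem FanSpace.isGeneratedBy_of_isEmbedding {A X Z : Type u} [TopologicalSpace A] [Nonempty A]
    [TopologicalSpace X] [TopologicalSpace Z] [IsGeneratedBy (fun _ : Unit => A) Z] {O : Set A}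
    (hO : IsOpen O) (hOc : ¬ IsOpen Oᶜ) {e : X → Z} (he : IsEmbedding e) :
    IsGeneratedBy (fun _ : Unit => FanSpace A O) X := by
  refine isGeneratedBy_of_forall_isOpen fun U hU => by_contra fun hUo => ?_
  obtain ⟨x₀, hx₀U, hx₀⟩ := he.isInducing.exists_mem_closure_image_compl hUo
  obtain ⟨D⟩ := nonempty_probeDescent (A := A) (e '' Uᶜ)
  obtain ⟨g, hg₀, hgU⟩ := exists_continuous_lift_of_isOpen_singleton (T := Uᶜ)
    (fun _ => FanSpace.isOpen_singleton hO) (FanSpace.continuous_run D hO (e x₀)) he.isInducing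
    rfl (by rintro ⟨x, hx, hex⟩; exact hx (he.injective hex ▸ hx₀U))
  obtain ⟨F, hF, hFU⟩ := FanSpace.exists_isNbhdFamily_of_isOpen hOc (hU () g)
    (by simpa [hg₀] using hx₀U)
  obtain ⟨s, hs, hsS⟩ := D.exists_isBranch_run_mem hF (D.closure_subset hx₀)
  exact hgU ⟨s⟩ hsS (hFU ⟨s⟩ hs)

section NotAlexandrovDiscrete

variable {A : Type u} [TopologicalSpace A]

theorem infinite_of_not_alexandrovDiscrete (h : ¬ AlexandrovDiscrete A) : Infinite A := by
  by_contra hA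
  have : Finite A := not_infinite_iff_finite.1 hA
  exact h inferInstance

theorem exists_not_isOpen_singleton_of_not_alexandrovDiscrete (h : ¬ AlexandrovDiscrete A) :
    ∃ a : A, ¬ IsOpen {a} := by
  by_contra! hA
  have : DiscreteTopology A := discreteTopology_iff_isOpen_singleton.2 hA
  exact h inferInstance

theorem exists_isOpen_not_isOpen_compl_of_not_alexandrovDiscrete (h : ¬ AlexandrovDiscrete A) :
    ∃ O : Set A, IsOpen O ∧ ¬ IsOpen Oᶜ := by
  by_contra! hA
  refine h ⟨fun S hS => ?_⟩
  rw [Set.sInter_eq_compl_sUnion_compl]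
  exact hA _ (isOpen_sUnion <| by rintro _ ⟨O, hO, rfl⟩; exact hA O (hS O hO))

end NotAlexandrovDiscrete

/-- for an arbitrary topological space `A` which is not finitely generated, there
is a filter space `Y` of the same cardinality as `A` with `CH {Y} = SCH {A}`. -/
theorem stmt9 (A : Type u) [tA : TopologicalSpace A] (hfg : ¬ AlexandrovDiscrete A) :
    ∃ (Y : Type u) (tY : TopologicalSpace Y) (b : Y), @IsFilterSpace Y tY b ∧
      Cardinal.mk Y = Cardinal.mk A ∧
      ∀ (X : Type u) (tX : TopologicalSpace X),
        CH (singleClass Y tY) X tX ↔ SCH (singleClass A tA) X tX := by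
  have : Infinite A := infinite_of_not_alexandrovDiscrete hfg
  obtain ⟨m, hm⟩ := exists_not_isOpen_singleton_of_not_alexandrovDiscrete hfg
  obtain ⟨O, hO, hOc⟩ := exists_isOpen_not_isOpen_compl_of_not_alexandrovDiscrete hfg
  refine ⟨FanSpace A O, inferInstance, FanSpace.root O, FanSpace.isFilterSpace hO hOc hm,
    Cardinal.mk_fanSpace O, fun X tX => CH_singleClass_iff.trans ⟨fun _ => SCH_of_isGeneratedBy
    (FanSpace.mem_SCH (O := O)), ?_⟩⟩
  rintro ⟨Z, tZ, e, hZ, he⟩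
  have := CH_singleClass_iff.1 hZ
  exact FanSpace.isGeneratedBy_of_isEmbedding hO hOc he
end

section
/- Let α ≥ ω₁ be a regular cardinal. Then SCH({C(α)}) = CH({C⁻(α,n) : 0 < n < ω}), i.e., the class of all subspaces of spaces in the coreflective hull of C(α) equals the coreflective hull of the family of spaces C⁻(α,n) for natural numbers n ≥ 1. -/
universe u v

/-- `CIdx K m` represents the set `αⁿ` for `n = m+1`, where `K` plays the role of `α`. -/
def CIdx (K : Type u) : ℕ → Type u
  | 0 => K
  | m + 1 => K × CIdx K m

/-- Given a subset `U` of `(α × αⁿ) ∪ {∞}` and `ξ`, the set `{x ∈ αⁿ : (ξ,x) ∈ U} ∪ {∞}`. -/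
def cslice {K J : Type u} (U : Set (Option (K × J))) (ξ : K) : Set (Option J) :=
  insert none (Option.some '' {x : J | Option.some (ξ, x) ∈ U})

/-- The openness predicate of the space `C⁻(α, m+1)`. -/
def CIsOpen (K : Type u) : (m : ℕ) → Set (Option (CIdx K m)) → Prop
  | 0, U => none ∈ U → Cardinal.mk ((Option.some ⁻¹' U)ᶜ : Set K) < Cardinal.mk K
  | m + 1, U => none ∈ U →
      Cardinal.mk (({ξ : K | CIsOpen K m (cslice U ξ)}ᶜ : Set K)) < Cardinal.mk K

theorem cslice_mono {K J : Type u} {U V : Set (Option (K × J))} (h : U ⊆ V) (ξ : K) :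
    cslice U ξ ⊆ cslice V ξ := by
  intro z hz
  rcases hz with hz | hz
  · exact Or.inl hz
  · rcases hz with ⟨x, hx, rfl⟩
    exact Or.inr ⟨x, h hx, rfl⟩

theorem none_mem_cslice {K J : Type u} (U : Set (Option (K × J))) (ξ : K) :
    none ∈ cslice U ξ := Set.mem_insert _ _

theorem cisOpen_of_none_not_mem (K : Type u) (m : ℕ) (U : Set (Option (CIdx K m)))
    (h : none ∉ U) : CIsOpen K m U := by
  cases m with
  | zero => exact fun hU => absurd hU h
  | succ m => exact fun hU => absurd hU h

theorem cisOpen_mono (K : Type u) (m : ℕ) :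
    ∀ U V : Set (Option (CIdx K m)), CIsOpen K m U → U ⊆ V → (none ∈ V → none ∈ U) →
      CIsOpen K m V := by
  induction m with
  | zero =>
    intro U V hU hUV hnone hV
    refine lt_of_le_of_lt (Cardinal.mk_le_mk_of_subset ?_) (hU (hnone hV))
    intro k hk hU'
    exact hk (hUV hU')
  | succ m ih =>
    intro U V hU hUV hnone hV
    refine lt_of_le_of_lt (Cardinal.mk_le_mk_of_subset ?_) (hU (hnone hV))
    intro ξ hξ hopen
    exact hξ (ih _ _ hopen (cslice_mono hUV ξ) (fun _ => none_mem_cslice U ξ))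

theorem cslice_univ {K J : Type u} (ξ : K) :
    cslice (Set.univ : Set (Option (K × J))) ξ = Set.univ := by
  ext z
  cases z with
  | none => simp [cslice]
  | some j => simp [cslice]

theorem cisOpen_univ (K : Type u) [Nonempty K] (m : ℕ) : CIsOpen K m Set.univ := by
  cases m with
  | zero =>
    intro _
    show Cardinal.mk ((Option.some ⁻¹' (Set.univ : Set (Option K)))ᶜ : Set K) < Cardinal.mk K
    simp only [Set.preimage_univ, Set.compl_univ, Cardinal.mk_emptyCollection]
    exact Cardinal.mk_ne_zero K |>.bot_lt
  | succ m =>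
    intro _
    have h : ({ξ : K | CIsOpen K m (cslice (Set.univ : Set (Option (CIdx K (m+1)))) ξ)}ᶜ : Set K)
        = ∅ := by
      ext ξ
      simp only [Set.mem_compl_iff, Set.mem_setOf_eq, Set.mem_empty_iff_false, iff_false, not_not]
      show CIsOpen K m (cslice (Set.univ : Set (Option (K × CIdx K m))) ξ)
      rw [cslice_univ]
      exact cisOpen_univ K m
    rw [h, Cardinal.mk_emptyCollection]
    exact Cardinal.mk_ne_zero K |>.bot_lt

theorem some_mem_cslice_iff {K J : Type u} (U : Set (Option (K × J))) (ξ : K) (x : J) :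
    some x ∈ cslice U ξ ↔ some (ξ, x) ∈ U := by
  simp [cslice]

theorem cslice_inter {K J : Type u} (U V : Set (Option (K × J))) (ξ : K) :
    cslice (U ∩ V) ξ = cslice U ξ ∩ cslice V ξ := by
  ext z
  cases z with
  | none => simp [none_mem_cslice]
  | some x => simp [some_mem_cslice_iff]

theorem cisOpen_inter (K : Type u) [Infinite K] (m : ℕ) :
    ∀ U V : Set (Option (CIdx K m)), CIsOpen K m U → CIsOpen K m V →
      CIsOpen K m (U ∩ V) := by
  induction m with
  | zero =>
    intro U V hU hV h
    have hsub : ((Option.some ⁻¹' (U ∩ V))ᶜ : Set K) ⊆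
        (Option.some ⁻¹' U)ᶜ ∪ (Option.some ⁻¹' V)ᶜ := by
      exact fun x hx => Classical.byContradiction fun hc =>
        hx ⟨Classical.byContradiction fun h1 => hc (Or.inl h1),
          Classical.byContradiction fun h2 => hc (Or.inr h2)⟩
    refine lt_of_le_of_lt (Cardinal.mk_le_mk_of_subset hsub) ?_
    refine lt_of_le_of_lt (Cardinal.mk_union_le _ _) ?_
    exact Cardinal.add_lt_of_lt (Cardinal.aleph0_le_mk K) (hU h.1) (hV h.2)
  | succ m ih =>
    intro U V hU hV h
    have hsub : ({ξ : K | CIsOpen K m (cslice (U ∩ V) ξ)}ᶜ : Set K) ⊆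
        {ξ : K | CIsOpen K m (cslice U ξ)}ᶜ ∪ {ξ : K | CIsOpen K m (cslice V ξ)}ᶜ := by
      intro ξ hξ
      by_contra hc
      simp only [Set.mem_union, Set.mem_compl_iff, Set.mem_setOf_eq, not_not] at hc hξ
      push_neg at hc
      exact hξ (by rw [show cslice (U ∩ V) ξ = _ from cslice_inter (K := K) (J := CIdx K m) U V ξ]; exact ih _ _ hc.1 hc.2)
    refine lt_of_le_of_lt (Cardinal.mk_le_mk_of_subset hsub) ?_
    refine lt_of_le_of_lt (Cardinal.mk_union_le _ _) ?_
    exact Cardinal.add_lt_of_lt (Cardinal.aleph0_le_mk K) (hU h.1) (hV h.2)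

theorem cisOpen_sUnion (K : Type u) (m : ℕ) (S : Set (Set (Option (CIdx K m))))
    (hS : ∀ U ∈ S, CIsOpen K m U) : CIsOpen K m (⋃₀ S) := by
  by_cases h : none ∈ ⋃₀ S
  · obtain ⟨U, hUS, hU⟩ := h
    exact cisOpen_mono K m U _ (hS U hUS) (Set.subset_sUnion_of_mem hUS) (fun _ => hU)
  · exact cisOpen_of_none_not_mem _ _ _ h

/-- The space `C⁻(α, m+1)` from the paper (so `m = 0` gives `C(α)` itself);
`K` plays the role of the set of ordinals `< α` and `none` plays the role of `∞`. -/
def CTop (K : Type u) [Infinite K] (m : ℕ) : TopologicalSpace (Option (CIdx K m)) where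
  IsOpen := CIsOpen K m
  isOpen_univ := cisOpen_univ K m
  isOpen_inter := cisOpen_inter K m
  isOpen_sUnion := cisOpen_sUnion K m

instance instCTop (K : Type u) [Infinite K] (m : ℕ) : TopologicalSpace (Option (CIdx K m)) :=
  CTop K m

/-!
A space in `CH {C(α)}` is `C(α)`-generated, so a subset closed under limits of convergent
`α`-sequences is closed. As `cf α > ω`, the union of the finite iterates of this `α`-closure of a
set `A` is closed under it, hence closed. A point of the `(n+1)`-st iterate is the root of a tree
of height `n+1` of convergent `α`-sequences with leaves in `A`, i.e. the image of `∞` under a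
continuous map from `C⁻(α,n+1)` sending all other points into `A`. For a subspace `X` and `F ⊆ X`
whose preimages under all maps `C⁻(α,n) → X` are closed, such a tree with leaves in `F` can only
have its root in `F`, so `F` is the trace of a closed set: `X` is generated by the `C⁻(α,n)`.

Conversely, `C⁻(α,n+1)` is a subspace of the space obtained from `C(α)` by attaching a copy of
`C⁻(α,n)` at every isolated point, and `SCH 𝒜` is coreflective because the pushout of an embedding
along a quotient map is an embedding.
-/
open Topology Cardinal Function Set

namespace CH

variable {𝒜 : TopClass.{u}}

theorem of_mem {Y : Type u} [tY : TopologicalSpace Y] (h : 𝒜 Y tY) : CH 𝒜 Y tY :=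
  fun _ _ h𝒜 => h𝒜 Y tY h

theorem isCoreflective (𝒜 : TopClass.{u}) : IsCoreflective (CH 𝒜) :=
  ⟨fun ι X t h C hC h𝒜 => hC.1 ι X t fun i => h i C hC h𝒜,
    fun X Y tX tY f hf h C hC h𝒜 => hC.2 X Y tX tY f hf (h C hC h𝒜)⟩

theorem of_isGeneratedBy {ι : Type u} {A : ι → Type u} [∀ i, TopologicalSpace (A i)]
    [Nonempty (Σ i, A i)] (hA : ∀ i, 𝒜 (A i) inferInstance) {X : Type u}
    [tX : TopologicalSpace X] [IsGeneratedBy A X] : CH 𝒜 X tX := by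
  let q : (Σ f : Σ i, C(A i, X), A f.1) → X := fun p => p.1.2 p.2
  have hq : IsQuotientMap q := by
    refine ⟨⟨(IsGeneratedBy.generatedBy_eq (X := A)).symm.trans
      (TopologicalSpace.generatedBy_eq_coinduced A)⟩, fun x => ?_⟩
    obtain ⟨i, a⟩ := Classical.arbitrary (Σ i, A i)
    exact ⟨⟨⟨i, ContinuousMap.const _ x⟩, a⟩, rfl⟩
  exact (isCoreflective 𝒜).2 _ _ _ _ q hq
    ((isCoreflective 𝒜).1 _ _ _ fun p => of_mem (hA p.1))

end CH

section GeneratedBy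

variable {ι : Type*} (A : ι → Type u) [∀ i, TopologicalSpace (A i)]

theorem isCoreflective_isGeneratedBy_s10 : IsCoreflective fun X tX => @IsGeneratedBy ι A _ X tX :=
  ⟨fun _ _ _ h => by have := h; infer_instance, fun _ _ _ _ _ hf _ => hf.isGeneratedBy⟩

variable {A}

theorem isGeneratedBy_of_isClosed {X : Type*} [TopologicalSpace X]
    (h : ∀ F : Set X, (∀ i (f : C(A i, X)), IsClosed (f ⁻¹' F)) → IsClosed F) :
    IsGeneratedBy A X := by
  refine IsGeneratedBy.iff_le_generatedBy.2 fun U hU => ?_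
  simp only [isOpen_iSup_iff, isOpen_coinduced] at hU
  exact isClosed_compl_iff.1 (h Uᶜ fun i f => (hU i f).isClosed_compl)

end GeneratedBy

theorem isGeneratedBy_of_CH_singleClass {A : Type u} [tA : TopologicalSpace A] {Y : Type u}
    [tY : TopologicalSpace Y] (hY : CH (singleClass A tA) Y tY) :
    IsGeneratedBy (fun _ : Unit => A) Y := by
  have : IsGeneratedBy (fun _ : Unit => A) A := IsGeneratedBy.inst (X := fun _ : Unit => A) ()
  exact hY _ (isCoreflective_isGeneratedBy_s10 _) fun _ _ ⟨φ⟩ => φ.symm.isQuotientMap.isGeneratedBy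

theorem Topology.IsEmbedding.exists_pushout {X Y Z : Type u} [TopologicalSpace X]
    [TopologicalSpace Y] [TopologicalSpace Z] {e : X → Y} {q : X → Z} (he : IsEmbedding e)
    (hq : IsQuotientMap q) :
    ∃ (W : Type u) (_ : TopologicalSpace W) (π : Y → W) (j : Z → W),
      IsQuotientMap π ∧ IsEmbedding j ∧ j ∘ q = π ∘ e := by
  classical
  -- identify `e x` with `e x'` whenever `q x = q x'`, and nothing else
  let φ : Y → Z ⊕ Y := extend e (Sum.inl ∘ q) Sum.inr
  have hφe (x : X) : φ (e x) = .inl (q x) := he.injective.extend_apply _ _ x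
  have hφ (y : Y) (hy : y ∉ range e) : φ y = .inr y := extend_apply' _ _ _ hy
  let π : Y → Quotient (Setoid.ker φ) := Quotient.mk _
  let j (z : Z) : Quotient (Setoid.ker φ) := π (e (surjInv hq.surjective z))
  have hφj (z : Z) : Setoid.kerLift φ (j z) = .inl z := by
    simp only [j, π, Setoid.kerLift_mk, hφe, surjInv_eq hq.surjective z]
  have hjq : j ∘ q = π ∘ e :=
    funext fun x => Setoid.kerLift_injective φ (by simp [hφj, π, hφe])
  have hj : Continuous j :=
    hq.continuous_iff.2 (hjq ▸ continuous_quotient_mk'.comp he.continuous)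
  refine ⟨_, inferInstance, π, j, isQuotientMap_quotient_mk', ⟨⟨le_antisymm
    (continuous_iff_le_induced.1 hj) fun U hU => ?_⟩, fun z z' h => ?_⟩, hjq⟩
  · obtain ⟨V, hV, hVU⟩ := he.isInducing.isOpen_iff.1 (hq.continuous.isOpen_preimage U hU)
    let T : Set (Z ⊕ Y) := {s | Sum.elim (· ∈ U) (· ∈ V) s}
    have hφV : φ ⁻¹' T = V := by
      ext y
      by_cases hy : y ∈ range e
      · obtain ⟨x, rfl⟩ := hy
        simp only [T, mem_preimage, mem_ofPred_eq, hφe, Sum.elim_inl]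
        exact (Set.ext_iff.1 hVU x).symm
      · simp [T, hφ y hy]
    refine isOpen_induced_iff.2 ⟨Setoid.kerLift φ ⁻¹' T, ?_, ?_⟩
    · change IsOpen (φ ⁻¹' T)
      rwa [hφV]
    · ext z
      simp [T, hφj]
  · exact Sum.inl_injective ((hφj z).symm.trans (h ▸ hφj z'))

namespace SCH

variable {𝒜 : TopClass.{u}}

theorem of_CH {X : Type u} [tX : TopologicalSpace X] (h : CH 𝒜 X tX) : SCH 𝒜 X tX :=
  ⟨X, tX, id, h, .id⟩

theorem of_isEmbedding {X Z : Type u} [tX : TopologicalSpace X] [tZ : TopologicalSpace Z]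
    {f : Z → X} (hf : IsEmbedding f) (hX : SCH 𝒜 X tX) : SCH 𝒜 Z tZ :=
  let ⟨Y, _, e, hY, he⟩ := hX
  ⟨Y, _, e ∘ f, hY, he.comp hf⟩

theorem sigma (ι : Type u) (X : ι → Type u) (t : (i : ι) → TopologicalSpace (X i))
    (h : ∀ i, SCH 𝒜 (X i) (t i)) : SCH 𝒜 (Σ i, X i) instTopologicalSpaceSigma := by
  choose Y tY e hY he using h
  exact ⟨Σ i, Y i, _, Sigma.map id e, (CH.isCoreflective 𝒜).1 ι Y tY hY,
    (isEmbedding_sigmaMap injective_id).2 he⟩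

theorem of_isQuotientMap {X Z : Type u} [tX : TopologicalSpace X] [tZ : TopologicalSpace Z]
    {q : X → Z} (hq : IsQuotientMap q) (hX : SCH 𝒜 X tX) : SCH 𝒜 Z tZ := by
  obtain ⟨Y, _, e, hY, he⟩ := hX
  obtain ⟨W, _, π, j, hπ, hj, -⟩ := he.exists_pushout hq
  exact ⟨W, _, j, (CH.isCoreflective 𝒜).2 _ _ _ _ π hπ hY, hj⟩

theorem isCoreflective (𝒜 : TopClass.{u}) : IsCoreflective (SCH 𝒜) :=
  ⟨sigma, fun _ _ _ _ _ hq hX => of_isQuotientMap hq hX⟩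

end SCH

theorem cslice_singleton_none {K J : Type u} (ξ : K) :
    cslice ({none} : Set (Option (K × J))) ξ = {none} := by
  ext (_ | x) <;> simp [cslice]

section CMinus

variable {K : Type u} [Infinite K]

theorem not_isOpen_singleton_none (m : ℕ) : ¬ IsOpen ({none} : Set (Option (CIdx K m))) := by
  change ¬ CIsOpen K m {none}
  induction m with
  | zero =>
    intro h
    have hall : (some ⁻¹' ({none} : Set (Option (CIdx K 0))))ᶜ = Set.univ := by ext; simp
    exact (h rfl).ne ((mk_congr (Equiv.setCongr hall)).trans mk_univ)
  | succ m ih =>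
    intro h
    have hall :
        {ξ : K | CIsOpen K m (cslice ({none} : Set (Option (K × CIdx K m))) ξ)}ᶜ = Set.univ :=
      eq_univ_of_forall fun ξ hξ => ih (by rwa [mem_ofPred_eq, cslice_singleton_none] at hξ)
    exact (h rfl).ne ((mk_congr (Equiv.setCongr hall)).trans mk_univ)

theorem none_mem_of_isClosed {m : ℕ} {F : Set (Option (CIdx K m))} (hF : IsClosed F)
    (hleaves : ∀ x, some x ∈ F) : none ∈ F := by
  by_contra hnone
  have hFc : Fᶜ = {none} := by
    ext (_ | x) <;> simp [hnone, hleaves]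
  exact not_isOpen_singleton_none m (hFc ▸ hF.isOpen_compl)

theorem continuous_optionMap_of_injective {h : K → K} (hh : Injective h) :
    Continuous (Option.map h : Option (CIdx K 0) → Option (CIdx K 0)) := by
  refine continuous_def.2 fun U hU hnone => (?_ : _ ≤ _).trans_lt (hU hnone)
  exact mk_preimage_of_injective h (some ⁻¹' U)ᶜ hh

end CMinus

/-- `C(α)` with a copy of `C⁻(α,m+1)` attached at each `ξ < α` by its point `∞`: the copy
attached at `ξ` is `{node ξ} ∪ {leaf ξ x | x}`, and `root` is the `∞` of `C(α)`. -/
inductive Grafted (K : Type u) (m : ℕ) : Type u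
  | root
  | node (ξ : K)
  | leaf (ξ : K) (x : CIdx K m)

namespace Grafted

def Summand (K : Type u) (m : ℕ) : Option K → Type u
  | none => Option (CIdx K 0)
  | some _ => Option (CIdx K m)

def glue (K : Type u) (m : ℕ) : (Σ i, Summand K m i) → Grafted K m
  | ⟨none, none⟩ => root
  | ⟨none, some ξ⟩ => node ξ
  | ⟨some ξ, none⟩ => node ξ
  | ⟨some ξ, some x⟩ => leaf ξ x

variable {K : Type u} {m : ℕ}

def branch (ξ : K) (z : Option (CIdx K m)) : Grafted K m := glue K m ⟨some ξ, z⟩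

def incl : Option (CIdx K (m + 1)) → Grafted K m
  | none => root
  | some p => leaf p.1 p.2

def lift {Y : Type*} (f : Option (CIdx K 0) → Y) (g : K → Option (CIdx K m) → Y) :
    Grafted K m → Y
  | root => f none
  | node ξ => f (some ξ)
  | leaf ξ x => g ξ (some x)

theorem injective_incl : Injective (incl : Option (CIdx K (m + 1)) → Grafted K m) := by
  rintro (_ | ⟨ξ, x⟩) (_ | ⟨ξ', x'⟩) h <;> cases h <;> rfl

theorem cslice_preimage_incl {V : Set (Grafted K m)} {ξ : K} (hξ : node ξ ∈ V) :
    cslice (incl ⁻¹' V) ξ = branch ξ ⁻¹' V := by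
  ext (_ | x)
  · exact iff_of_true (none_mem_cslice _ ξ) hξ
  · exact some_mem_cslice_iff _ ξ x

variable [Infinite K]

instance instTopologicalSpaceSummand : (i : Option K) → TopologicalSpace (Summand K m i)
  | none => instCTop K 0
  | some _ => instCTop K m

instance : TopologicalSpace (Grafted K m) := .coinduced (glue K m) inferInstance

theorem isQuotientMap_glue : IsQuotientMap (glue K m) := by
  refine ⟨⟨rfl⟩, ?_⟩
  rintro (_ | ξ | ⟨ξ, x⟩)
  exacts [⟨⟨none, none⟩, rfl⟩, ⟨⟨none, some ξ⟩, rfl⟩, ⟨⟨some ξ, some x⟩, rfl⟩]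

theorem isOpen_iff {V : Set (Grafted K m)} :
    IsOpen V ↔ (root ∈ V → #{ξ | node ξ ∉ V} < #K) ∧ ∀ ξ, IsOpen (branch ξ ⁻¹' V) := by
  rw [isOpen_coinduced, isOpen_sigma_iff, Option.forall]
  rfl

theorem continuous_incl : Continuous (incl : Option (CIdx K (m + 1)) → Grafted K m) := by
  refine continuous_def.2 fun V hV hroot => ?_
  obtain ⟨hbase, hbranch⟩ := isOpen_iff.1 hV
  have hsub : {ξ | CIsOpen K m (cslice (incl ⁻¹' V) ξ)}ᶜ ⊆ {ξ | node ξ ∉ V} :=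
    fun ξ hξ hnode => hξ <| show CIsOpen K m _ from (cslice_preimage_incl hnode).symm ▸ hbranch ξ
  exact (mk_le_mk_of_subset hsub).trans_lt (hbase hroot)

theorem exists_isOpen_preimage_incl {U : Set (Option (CIdx K (m + 1)))} (hU : IsOpen U) :
    ∃ V : Set (Grafted K m), IsOpen V ∧ incl ⁻¹' V = U := by
  let V : Set (Grafted K m) := fun
    | root => none ∈ U
    | node ξ => none ∈ U ∧ CIsOpen K m (cslice U ξ)
    | leaf ξ x => some (ξ, x) ∈ U
  refine ⟨V, isOpen_iff.2 ⟨fun hroot => (hU hroot).trans_le' (mk_le_mk_of_subset ?_),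
    fun ξ => ?_⟩, ?_⟩
  · exact fun ξ hξ hopen => hξ ⟨hroot, hopen⟩
  · by_cases hnode : node ξ ∈ V
    · have : branch ξ ⁻¹' V = cslice U ξ := by
        ext (_ | x)
        · exact iff_of_true hnode (none_mem_cslice _ ξ)
        · exact (some_mem_cslice_iff U ξ x).symm
      exact this ▸ hnode.2
    · exact cisOpen_of_none_not_mem K m _ hnode
  · ext (_ | ⟨ξ, x⟩) <;> rfl

theorem isEmbedding_incl : IsEmbedding (incl : Option (CIdx K (m + 1)) → Grafted K m) := by
  refine ⟨⟨le_antisymm (continuous_iff_le_induced.1 continuous_incl) fun U hU => ?_⟩,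
    injective_incl⟩
  obtain ⟨V, hV, hVU⟩ := exists_isOpen_preimage_incl hU
  exact isOpen_induced_iff.2 ⟨V, hV, hVU⟩

theorem continuous_lift {Y : Type*} [TopologicalSpace Y] {f : Option (CIdx K 0) → Y}
    {g : K → Option (CIdx K m) → Y} (hf : Continuous f) (hg : ∀ ξ, Continuous (g ξ))
    (hfg : ∀ ξ, g ξ none = f (some ξ)) : Continuous (lift f g) := by
  refine isQuotientMap_glue.continuous_iff.2 (continuous_sigma_iff.2 ?_)
  rintro (_ | ξ)
  · change Continuous fun z : Option (CIdx K 0) => lift f g (glue K m ⟨none, z⟩)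
    exact hf.congr fun z => by cases z <;> rfl
  · change Continuous fun z : Option (CIdx K m) => lift f g (glue K m ⟨some ξ, z⟩)
    refine (hg ξ).congr fun z => ?_
    cases z
    exacts [hfg ξ, rfl]

end Grafted

section AClosure

variable {K : Type u} [Infinite K] {Y : Type*} [TopologicalSpace Y]

/-- Continuous maps `C(α) → Y` are the `α`-sequences in `Y` together with a limit, so this is the
set of limits of `α`-sequences in `S`. -/
def aClosure (K : Type u) [Infinite K] (S : Set Y) : Set Y :=
  {y | ∃ f : C(Option (CIdx K 0), Y), f none = y ∧ ∀ ξ, f (some ξ) ∈ S}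

theorem mem_aClosure_of_mk_eq {S : Set Y} (f : C(Option (CIdx K 0), Y)) {s : Set K}
    (hs : #s = #K) (hS : ∀ ξ ∈ s, f (some ξ) ∈ S) : f none ∈ aClosure K S := by
  obtain ⟨e⟩ := Cardinal.eq.1 hs.symm
  have hinj : Injective (Subtype.val ∘ e) := Subtype.val_injective.comp e.injective
  exact ⟨f.comp ⟨_, continuous_optionMap_of_injective hinj⟩, rfl, fun ξ => hS _ (e ξ).2⟩

theorem isClosed_of_aClosure_subset [IsGeneratedBy (fun _ : Unit => Option (CIdx K 0)) Y]
    {S : Set Y} (hS : aClosure K S ⊆ S) : IsClosed S := by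
  refine (IsGeneratedBy.isClosed_iff (fun _ : Unit => Option (CIdx K 0))).2 fun _ f => ?_
  refine isOpen_compl_iff.1 fun hnone => (mk_set_le _).lt_of_ne fun hs => hnone (hS ?_)
  exact mem_aClosure_of_mk_eq f hs fun ξ hξ => not_not.1 hξ

theorem aClosure_iUnion_iterate_subset (hK : ℵ₀ < (#K).ord.cof) (A : Set Y) :
    aClosure K (⋃ n, (aClosure K)^[n] A) ⊆ ⋃ n, (aClosure K)^[n] A := by
  rintro _ ⟨f, rfl, hf⟩
  choose n hn using fun ξ => mem_iUnion.1 (hf ξ)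
  obtain ⟨k, hk⟩ := infinite_pigeonhole (fun ξ : K => ULift.up.{u} (n ξ)) (aleph0_le_mk K)
    (by simpa using hK)
  refine mem_iUnion.2 ⟨k.down + 1, ?_⟩
  rw [iterate_succ_apply']
  refine mem_aClosure_of_mk_eq f hk fun ξ hξ => ?_
  rw [← show n ξ = k.down from congrArg ULift.down hξ]
  exact hn ξ

theorem exists_cMinus_of_mem_iterate_aClosure {A : Set Y} :
    ∀ (n : ℕ) {y : Y}, y ∈ (aClosure K)^[n + 1] A →
      ∃ g : C(Option (CIdx K n), Y), g none = y ∧ ∀ x, g (some x) ∈ A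
  | 0, _, hy => hy
  | n + 1, y, hy => by
    rw [iterate_succ_apply'] at hy
    obtain ⟨f, rfl, hf⟩ := hy
    choose g hgf hgA using fun ξ => exists_cMinus_of_mem_iterate_aClosure n (hf ξ)
    refine ⟨⟨Grafted.lift f (fun ξ => g ξ) ∘ Grafted.incl, ?_⟩, rfl, fun x => hgA x.1 x.2⟩
    exact (Grafted.continuous_lift f.continuous (fun ξ => (g ξ).continuous) hgf).comp
      Grafted.continuous_incl

end AClosure

section Main

variable {K : Type u} [Infinite K]

theorem isGeneratedBy_cMinus_of_isEmbedding (hK : ℵ₀ < (#K).ord.cof) {X Y : Type*}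
    [TopologicalSpace X] [TopologicalSpace Y]
    [IsGeneratedBy (fun _ : Unit => Option (CIdx K 0)) Y] {e : X → Y} (he : IsEmbedding e) :
    IsGeneratedBy (fun n : ULift.{u} ℕ => Option (CIdx K n.down)) X := by
  refine isGeneratedBy_of_isClosed fun F hF => ?_
  have hS := isClosed_of_aClosure_subset (aClosure_iUnion_iterate_subset hK (e '' F))
  suffices e ⁻¹' ⋃ n, (aClosure K)^[n] (e '' F) ⊆ F by
    rw [← (this.antisymm fun x hx => mem_iUnion.2 ⟨0, mem_image_of_mem e hx⟩)]
    exact hS.preimage he.continuous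
  intro x hx
  have : Nonempty X := ⟨x⟩
  obtain ⟨_ | n, hn⟩ := mem_iUnion.1 hx
  · obtain ⟨x', hx', hxx'⟩ := hn
    exact he.injective hxx' ▸ hx'
  obtain ⟨g, hgx, hgF⟩ := exists_cMinus_of_mem_iterate_aClosure n hn
  have hg : ∀ z, e (invFun e (g z)) = g z := by
    rintro (_ | w)
    · exact invFun_eq ⟨x, hgx.symm⟩
    · obtain ⟨x', -, hx'⟩ := hgF w
      exact invFun_eq ⟨x', hx'⟩
  let h : C(Option (CIdx K n), X) := ⟨invFun e ∘ g, he.continuous_iff.2 <| by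
    simpa only [comp_def, hg] using g.continuous⟩
  have hroot : h none = x := he.injective ((hg none).trans hgx)
  refine hroot ▸ none_mem_of_isClosed (hF ⟨n⟩ h) fun w => ?_
  obtain ⟨x', hx'F, hx'⟩ := hgF w
  have : h (some w) = x' := he.injective ((hg (some w)).trans hx'.symm)
  rwa [mem_preimage, this]

theorem sch_cMinus (m : ℕ) :
    SCH (singleClass (Option (CIdx K 0)) (CTop K 0)) (Option (CIdx K m)) (CTop K m) := by
  induction m with
  | zero => exact SCH.of_CH (CH.of_mem ⟨.refl _⟩)
  | succ m ih =>
    refine SCH.of_isEmbedding Grafted.isEmbedding_incl (SCH.of_isQuotientMap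
      Grafted.isQuotientMap_glue (SCH.sigma _ _ _ ?_))
    rintro (_ | ξ)
    exacts [SCH.of_CH (CH.of_mem ⟨.refl _⟩), ih]

end Main

/-- for a regular cardinal `α ≥ ω₁` (realized as the cardinality of the infinite
type `K`), `SCH {C(α)} = CH {C⁻(α,n) : 0 < n < ω}`.  Here `CTop K m` is the space `C⁻(α, m+1)`,
so `CTop K 0 = C(α)` and the family `{CTop K m : m ∈ ℕ}` is `{C⁻(α,n) : 0 < n < ω}`. -/
theorem stmt10 (K : Type u) [Infinite K] (hreg : (Cardinal.mk K).IsRegular)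
    (hω1 : Cardinal.aleph 1 ≤ Cardinal.mk K)
    (X : Type u) (tX : TopologicalSpace X) :
    SCH (singleClass (Option (CIdx K 0)) (CTop K 0)) X tX ↔
      CH (fun Y tY => ∃ m : ℕ, Nonempty (@Homeomorph Y (Option (CIdx K m)) tY (CTop K m)))
        X tX := by
  have hK : ℵ₀ < (#K).ord.cof := by
    rw [hreg.cof_ord]
    exact aleph0_lt_aleph_one.trans_le hω1
  constructor
  · rintro ⟨Y, tY, e, hY, he⟩
    have := isGeneratedBy_of_CH_singleClass hY
    have := isGeneratedBy_cMinus_of_isEmbedding hK he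
    exact CH.of_isGeneratedBy fun n : ULift ℕ => ⟨n.down, ⟨.refl _⟩⟩
  · exact fun h => h _ (SCH.isCoreflective _) fun _ _ ⟨m, ⟨φ⟩⟩ =>
      SCH.of_isEmbedding φ.isEmbedding (sch_cMinus m)
end
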